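/- arXiv:2312.02414 — 5 statements merged into one kernel-verified Lean document; each statement's English description precedes it below -/
import Mathlib

section
/- Let f : ℝ_{>0} → ℝ_{>0} be an increasing function with ∑_{k=1}^∞ 1/f(k) < ∞ which grows at most polynomially (there exist k > 0 and x₀ > 0 with f(x) ≤ x^k for all x ≥ x₀). Then for almost every m×n real matrix B there exists Q₀ > 0 such that for all Q ≥ Q₀ one has Q^{−1/m} (f(log Q))^{−1/m} < inf{γ_{(B;Q)}(Bk) : k ∈ ℤ^n ∩ (0, Q^{1/n}]^n}. -/
open MeasureTheory
open scoped ENNReal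

/-- The `L^p` norm of a vector in `ℝ^ι`, for `p ∈ [1,∞]` (junk values otherwise). -/
noncomputable def lpNorm (p : ℝ≥0∞) {ι : Type*} [Fintype ι] (x : ι → ℝ) : ℝ :=
  ‖(WithLp.equiv p (ι → ℝ)).symm x‖

/-- The Euclidean (`L²`) norm of a vector. -/
noncomputable def euclNorm {ι : Type*} [Fintype ι] (x : ι → ℝ) : ℝ :=
  Real.sqrt (∑ i, x i ^ 2)

/-- `cone(S) = {c • u : u ∈ S, c > 0}`. -/
def cone {m : ℕ} (S : Set (Fin m → ℝ)) : Set (Fin m → ℝ) :=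
  {y | ∃ u ∈ S, ∃ c : ℝ, 0 < c ∧ y = c • u}

/-- `S` is an open subset of the unit (Euclidean) sphere of `ℝ^m`. -/
def IsOpenSubsetOfSphere {m : ℕ} (S : Set (Fin m → ℝ)) : Prop :=
  ∃ U : Set (Fin m → ℝ), IsOpen U ∧ S = U ∩ {u | euclNorm u = 1}

/-- Matrix-vector multiplication, with the matrix given as `Fin m → Fin n → ℝ`. -/
def matVec {m n : ℕ} (B : Fin m → Fin n → ℝ) (x : Fin n → ℝ) : Fin m → ℝ :=
  fun i => ∑ j, B i j * x j

/-- The gap function `γ_{(B;Q)}(v)`: the infimum of `‖Bk + l − v‖_p` over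
`k ∈ ℤ^n ∩ (0, Q^{1/n}]^n`, `l ∈ ℤ^m` with `Bk + l − v ∈ cone S`;
the infimum of the empty set is `∞`. -/
noncomputable def gap (p : ℝ≥0∞) {m n : ℕ} (S : Set (Fin m → ℝ))
    (B : Fin m → Fin n → ℝ) (Q : ℝ) (v : Fin m → ℝ) : ℝ≥0∞ :=
  ⨅ (k : Fin n → ℤ) (_ : ∀ i, 0 < (k i : ℝ) ∧ (k i : ℝ) ≤ Q ^ ((n : ℝ)⁻¹))
    (l : Fin m → ℤ)
    (_ : (matVec B (fun j => (k j : ℝ)) + (fun i => (l i : ℝ)) - v) ∈ cone S),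
    ENNReal.ofReal (lpNorm p (matVec B (fun j => (k j : ℝ)) + (fun i => (l i : ℝ)) - v))


lemma abs_coord_le_lpNorm (p : ℝ≥0∞) (hp : 1 ≤ p) {ι : Type*} [Fintype ι] (x : ι → ℝ) (i : ι) :
    |x i| ≤ lpNorm p x := by
  unfold _root_.lpNorm
  rcases eq_or_ne p ⊤ with h | h
  · subst h
    rw [PiLp.norm_eq_ciSup]
    have : ‖(WithLp.equiv ⊤ (ι → ℝ)).symm x i‖ = |x i| := by
      rw [WithLp.equiv_symm_apply, PiLp.toLp_apply]; exact Real.norm_eq_abs _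
    rw [← this]
    exact le_ciSup (f := fun j => ‖(WithLp.equiv ⊤ (ι → ℝ)).symm x j‖)
      (Set.Finite.bddAbove (Set.finite_range _)) i
  · have h0 : 0 < p.toReal := ENNReal.toReal_pos (by intro h0; rw [h0] at hp; simp at hp) h
    rw [PiLp.norm_eq_sum h0]
    have h1 : |x i| ^ p.toReal ≤ ∑ j, ‖(WithLp.equiv p (ι → ℝ)).symm x j‖ ^ p.toReal := by
      have : |x i| ^ p.toReal = ‖(WithLp.equiv p (ι → ℝ)).symm x i‖ ^ p.toReal := by
        rw [WithLp.equiv_symm_apply, PiLp.toLp_apply, Real.norm_eq_abs]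
      rw [this]
      exact Finset.single_le_sum (fun j _ => Real.rpow_nonneg (norm_nonneg _) _)
        (Finset.mem_univ i)
    calc |x i| = (|x i| ^ p.toReal) ^ (1 / p.toReal) := by
          rw [← Real.rpow_mul (abs_nonneg _), mul_one_div_cancel h0.ne', Real.rpow_one]
      _ ≤ _ := Real.rpow_le_rpow (Real.rpow_nonneg (abs_nonneg _) _) h1 (by positivity)

lemma cone_ne_zero {m : ℕ} {S : Set (Fin m → ℝ)} (hS : IsOpenSubsetOfSphere S)
    {y : Fin m → ℝ} (hy : y ∈ cone S) : y ≠ 0 := by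
  obtain ⟨U, -, rfl⟩ := hS
  obtain ⟨u, ⟨-, hu⟩, c, hc, rfl⟩ := hy
  intro h
  have hu0 : u ≠ 0 := by
    intro h0
    rw [h0] at hu
    simp only [Set.mem_setOf_eq, euclNorm] at hu
    simp at hu
  exact hu0 (by simpa [smul_eq_zero, hc.ne'] using h)

lemma min_fract_le_abs (x : ℝ) (c : ℤ) :
    min (Int.fract x) (1 - Int.fract x) ≤ |x + c| := by
  have hx : x + c = Int.fract x + (⌊x⌋ + c : ℤ) := by
    rw [Int.fract]; push_cast; ring
  set j : ℤ := ⌊x⌋ + c with hj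
  rcases le_or_gt 0 j with hj0 | hj0
  · have : Int.fract x ≤ x + c := by
      rw [hx]; have : (0:ℝ) ≤ (j:ℝ) := by exact_mod_cast hj0
      linarith
    exact le_trans (min_le_left _ _) (le_trans this (le_abs_self _))
  · have h1 : j ≤ -1 := by omega
    have hj1 : (j:ℝ) ≤ -1 := by exact_mod_cast h1
    have : 1 - Int.fract x ≤ -(x + c) := by
      rw [hx]; have := Int.fract_lt_one x; linarith
    exact le_trans (min_le_right _ _) (le_trans this (neg_le_abs _))


noncomputable section
variable {n : ℕ}

/-- the shear-like matrix: identity with row `j₀` replaced by `q`. -/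
def shearMat (q : Fin n → ℤ) (j₀ : Fin n) : Matrix (Fin n) (Fin n) ℝ :=
  (1 : Matrix (Fin n) (Fin n) ℝ).updateRow j₀ (fun j => (q j : ℝ))

lemma shearMat_det (q : Fin n → ℤ) (j₀ : Fin n) : (shearMat q j₀).det = (q j₀ : ℝ) := by
  rw [shearMat, ← Matrix.det_transpose, ← Matrix.updateCol_transpose, Matrix.transpose_one]
  have := Matrix.cramer_one (n := Fin n) (α := ℝ)
  have h : Matrix.cramer (1 : Matrix (Fin n) (Fin n) ℝ) (fun j => (q j : ℝ)) j₀ =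
      ((1 : Matrix (Fin n) (Fin n) ℝ).updateCol j₀ fun j => (q j : ℝ)).det :=
    Matrix.cramer_apply _ _ _
  rw [← h, this]
  simp

def shearMap (q : Fin n → ℤ) (j₀ : Fin n) : (Fin n → ℝ) →ₗ[ℝ] (Fin n → ℝ) :=
  Matrix.toLin' (shearMat q j₀)

lemma shearMap_det (q : Fin n → ℤ) (j₀ : Fin n) :
    LinearMap.det (shearMap q j₀) = (q j₀ : ℝ) := by
  rw [shearMap, LinearMap.det_toLin', shearMat_det]

lemma shearMap_apply_self (q : Fin n → ℤ) (j₀ : Fin n) (b : Fin n → ℝ) :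
    shearMap q j₀ b j₀ = ∑ j, (q j : ℝ) * b j := by
  simp [shearMap, Matrix.toLin'_apply, Matrix.mulVec, dotProduct, shearMat]

lemma shearMap_apply_ne (q : Fin n → ℤ) (j₀ : Fin n) (b : Fin n → ℝ) (j : Fin n) (hj : j ≠ j₀) :
    shearMap q j₀ b j = b j := by
  simp [shearMap, Matrix.toLin'_apply, Matrix.mulVec, dotProduct, shearMat,
    Matrix.updateRow_ne hj, Matrix.one_apply]
end

noncomputable section
lemma slab_measure {n : ℕ} (q : Fin n → ℤ) (j₀ : Fin n) (hq : q j₀ ≠ 0) (c : ℝ) {ε : ℝ} (hε : 0 ≤ ε) (N : ℕ) :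
    volume {b : Fin n → ℝ | (∀ j, |b j| ≤ N) ∧ |(∑ j, (q j:ℝ) * b j) + c| < ε}
      ≤ ENNReal.ofReal (|(q j₀ : ℝ)|⁻¹ * ((2*ε) * (2*N)^(n-1))) := by
  classical
  set t : Fin n → Set ℝ := fun j => if j = j₀ then Set.Ioo (-c-ε) (-c+ε) else Set.Icc (-N) N with ht
  have hsub : {b : Fin n → ℝ | (∀ j, |b j| ≤ N) ∧ |(∑ j, (q j:ℝ) * b j) + c| < ε}
      ⊆ (shearMap q j₀) ⁻¹' (Set.univ.pi t) := by
    rintro b ⟨hbox, hslab⟩ j -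
    by_cases hj : j = j₀
    · subst hj
      rw [shearMap_apply_self]
      simp only [ht, if_pos rfl, Set.mem_Ioo]
      constructor <;> [skip; skip] <;> cases' abs_lt.1 hslab with h1 h2 <;> linarith
    · rw [shearMap_apply_ne _ _ _ _ hj]
      simp only [ht, if_neg hj, Set.mem_Icc]
      cases' abs_le.1 (hbox j) with h1 h2; exact ⟨h1, h2⟩
  have hdet : LinearMap.det (shearMap q j₀) ≠ 0 := by
    rw [shearMap_det]; exact_mod_cast hq
  calc volume {b : Fin n → ℝ | (∀ j, |b j| ≤ N) ∧ |(∑ j, (q j:ℝ) * b j) + c| < ε}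
      ≤ volume ((shearMap q j₀) ⁻¹' (Set.univ.pi t)) := measure_mono hsub
    _ = ENNReal.ofReal |(LinearMap.det (shearMap q j₀))⁻¹| * volume (Set.univ.pi t) :=
        Measure.addHaar_preimage_linearMap volume hdet _
    _ ≤ ENNReal.ofReal (|(q j₀ : ℝ)|⁻¹ * ((2*ε) * (2*N)^(n-1))) := by
        have hpi : volume (Set.univ.pi t) ≤ ENNReal.ofReal ((2*ε) * (2*N)^(n-1)) := by
          rw [volume_pi, Measure.pi_pi]
          have : ∏ j, volume (t j)
              = volume (t j₀) * ∏ j ∈ Finset.univ.erase j₀, volume (t j) :=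
            (Finset.mul_prod_erase _ _ (Finset.mem_univ j₀)).symm
          rw [this]
          have h1 : volume (t j₀) = ENNReal.ofReal (2*ε) := by
            simp only [ht, if_pos rfl, Real.volume_Ioo]; ring_nf
          have h2 : ∏ j ∈ Finset.univ.erase j₀, volume (t j) = (ENNReal.ofReal (2*N))^(n-1) := by
            rw [Finset.prod_congr rfl (fun j hj => ?_), Finset.prod_const,
              Finset.card_erase_of_mem (Finset.mem_univ j₀), Finset.card_univ, Fintype.card_fin]
            simp only [ht, if_neg (Finset.ne_of_mem_erase hj), Real.volume_Icc]
            rw [show ((N:ℝ) - -(N:ℝ)) = 2*(N:ℝ) by ring]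
          rw [h1, h2, ← ENNReal.ofReal_pow (by positivity), ← ENNReal.ofReal_mul (by positivity)]
        rw [shearMap_det]
        calc ENNReal.ofReal |((q j₀ : ℝ))⁻¹| * volume (Set.univ.pi t)
            ≤ ENNReal.ofReal |((q j₀ : ℝ))⁻¹| * ENNReal.ofReal ((2*ε) * (2*N)^(n-1)) :=
              mul_le_mul_right hpi _
          _ = ENNReal.ofReal (|(q j₀ : ℝ)|⁻¹ * ((2*ε) * (2*N)^(n-1))) := by
              rw [← ENNReal.ofReal_mul (abs_nonneg _), abs_inv]
end

def qSup {n : ℕ} (q : Fin n → ℤ) : ℕ := Finset.univ.sup (fun j => (q j).natAbs)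

lemma one_le_qSup {n : ℕ} {q : Fin n → ℤ} (hq : q ≠ 0) : 1 ≤ qSup q := by
  obtain ⟨j, hj⟩ := Function.ne_iff.1 hq
  have : 1 ≤ (q j).natAbs := by
    simp only [Pi.zero_apply] at hj; omega
  exact le_trans this (Finset.le_sup (f := fun j => (q j).natAbs) (Finset.mem_univ j))

lemma abs_cast_le_qSup {n : ℕ} (q : Fin n → ℤ) (j : Fin n) : |(q j : ℝ)| ≤ (qSup q : ℝ) := by
  rw [← Int.cast_abs, Int.abs_eq_natAbs]
  exact_mod_cast Finset.le_sup (f := fun j => (q j).natAbs) (Finset.mem_univ j)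

lemma rowBad_measure {n : ℕ} (hn : 1 ≤ n) (q : Fin n → ℤ) (hq : q ≠ 0) {ε : ℝ} (hε0 : 0 ≤ ε)
    (hε1 : ε ≤ 1) (N : ℕ) :
    volume {b : Fin n → ℝ | (∀ j, |b j| ≤ N) ∧ ∃ c : ℤ, |(∑ j, (q j:ℝ) * b j) + c| < ε}
      ≤ ENNReal.ofReal ((2*N*n+3) * (2 * (2*N)^(n-1)) * ε) := by
  classical
  have : Nonempty (Fin n) := ⟨⟨0, hn⟩⟩
  obtain ⟨j₀, -, hj₀⟩ := Finset.exists_mem_eq_sup Finset.univ Finset.univ_nonempty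
    (fun j => (q j).natAbs)
  set R : ℕ := qSup q with hRdef
  have hR1 : 1 ≤ R := one_le_qSup hq
  have hqj₀ : (q j₀).natAbs = R := hj₀.symm
  have hqj₀ne : q j₀ ≠ 0 := by
    intro h; rw [h] at hqj₀; simp at hqj₀; omega
  set K : ℕ := N*n*R + 1 with hKdef
  have hcover : {b : Fin n → ℝ | (∀ j, |b j| ≤ N) ∧ ∃ c : ℤ, |(∑ j, (q j:ℝ) * b j) + c| < ε}
      ⊆ ⋃ c ∈ Finset.Icc (-(K:ℤ)) (K:ℤ),
          {b : Fin n → ℝ | (∀ j, |b j| ≤ N) ∧ |(∑ j, (q j:ℝ) * b j) + c| < ε} := by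
    rintro b ⟨hbox, c, hc⟩
    have hdot : |∑ j, (q j:ℝ) * b j| ≤ N*n*R := by
      calc |∑ j, (q j:ℝ) * b j| ≤ ∑ j, |(q j:ℝ) * b j| := Finset.abs_sum_le_sum_abs _ _
        _ ≤ ∑ _j : Fin n, (R:ℝ) * N := by
            refine Finset.sum_le_sum (fun j _ => ?_)
            rw [abs_mul]
            exact mul_le_mul (abs_cast_le_qSup q j) (hbox j) (abs_nonneg _) (Nat.cast_nonneg _)
        _ = n * ((R:ℝ) * N) := by rw [Finset.sum_const, Finset.card_univ, Fintype.card_fin,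
            nsmul_eq_mul]
        _ = N*n*R := by ring
    have hcabs : |(c:ℝ)| ≤ (K:ℝ) := by
      have h1 : |(c:ℝ)| ≤ |(∑ j, (q j:ℝ) * b j) + c| + |∑ j, (q j:ℝ) * b j| := by
        have := abs_add_le ((∑ j, (q j:ℝ) * b j) + c) (-(∑ j, (q j:ℝ) * b j))
        simpa using this
      have : |(c:ℝ)| < ε + N*n*R := by linarith
      have hK : (K:ℝ) = N*n*R + 1 := by rw [hKdef]; push_cast; ring
      linarith
    have hcK : c ∈ Finset.Icc (-(K:ℤ)) (K:ℤ) := by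
      rw [Finset.mem_Icc]
      have : |c| ≤ (K:ℤ) := by exact_mod_cast (by rwa [← Int.cast_abs] at hcabs : ((|c|:ℤ):ℝ) ≤ (K:ℝ))
      exact abs_le.mp this
    exact Set.mem_biUnion hcK ⟨hbox, hc⟩
  calc volume {b : Fin n → ℝ | (∀ j, |b j| ≤ N) ∧ ∃ c : ℤ, |(∑ j, (q j:ℝ) * b j) + c| < ε}
      ≤ ∑ c ∈ Finset.Icc (-(K:ℤ)) (K:ℤ),
          volume {b : Fin n → ℝ | (∀ j, |b j| ≤ N) ∧ |(∑ j, (q j:ℝ) * b j) + c| < ε} :=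
        le_trans (measure_mono hcover) (measure_biUnion_finset_le _ _)
    _ ≤ ∑ _c ∈ Finset.Icc (-(K:ℤ)) (K:ℤ),
          ENNReal.ofReal ((R:ℝ)⁻¹ * ((2*ε) * (2*N)^(n-1))) := by
        refine Finset.sum_le_sum (fun c _ => ?_)
        have := slab_measure q j₀ hqj₀ne (c:ℝ) hε0 N
        have habs : |(q j₀ : ℝ)| = (R:ℝ) := by
          rw [← Int.cast_abs, Int.abs_eq_natAbs, hqj₀]; norm_num
        rwa [habs] at this
    _ = ((2*K+1 : ℕ) : ℝ≥0∞) * ENNReal.ofReal ((R:ℝ)⁻¹ * ((2*ε) * (2*N)^(n-1))) := by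
        have hcard : (Finset.Icc (-(K:ℤ)) (K:ℤ)).card = 2*K+1 := by
          rw [Int.card_Icc]
          omega
        rw [Finset.sum_const, hcard, nsmul_eq_mul]
    _ ≤ ENNReal.ofReal ((2*N*n+3) * (2 * (2*N)^(n-1)) * ε) := by
        rw [show ((2*K+1 : ℕ) : ℝ≥0∞) = ENNReal.ofReal ((2*K+1 : ℕ) : ℝ) from
          (ENNReal.ofReal_natCast _).symm, ← ENNReal.ofReal_mul (Nat.cast_nonneg _)]
        apply ENNReal.ofReal_le_ofReal
        have hRpos : (0:ℝ) < R := by exact_mod_cast hR1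
        have hKval : ((2*K+1 : ℕ):ℝ) = 2*(N*n*R)+3 := by rw [hKdef]; push_cast; ring
        rw [hKval]
        have key : (2*(N*n*R)+3 : ℝ) * (R:ℝ)⁻¹ ≤ 2*(N:ℝ)*n+3 := by
          rw [← div_eq_mul_inv, div_le_iff₀ hRpos]
          have h1 : (1:ℝ) ≤ R := by exact_mod_cast hR1
          nlinarith [Nat.cast_nonneg (α := ℝ) N, Nat.cast_nonneg (α := ℝ) n]
        calc (2*(N*n*R)+3 : ℝ) * ((R:ℝ)⁻¹ * ((2*ε) * (2*N)^(n-1)))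
            = ((2*(N*n*R)+3) * (R:ℝ)⁻¹) * ((2*ε) * (2*N)^(n-1)) := by ring
          _ ≤ (2*N*n+3) * ((2*ε) * (2*N)^(n-1)) := by
              refine mul_le_mul_of_nonneg_right key (by positivity)
          _ = (2*N*n+3) * (2 * (2*N)^(n-1)) * ε := by ring

lemma matBad_measure {m n : ℕ} (hn : 1 ≤ n) (q : Fin n → ℤ) (hq : q ≠ 0) {ε : ℝ} (hε0 : 0 ≤ ε)
    (hε1 : ε ≤ 1) (N : ℕ) :
    volume {B : Fin m → Fin n → ℝ | (∀ i j, |B i j| ≤ N) ∧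
        ∃ l : Fin m → ℤ, ∀ i, |(∑ j, (q j:ℝ) * B i j) + l i| < ε}
      ≤ ENNReal.ofReal (((2*N*n+3) * (2 * (2*N)^(n-1)))^m * ε^m) := by
  classical
  have hset : {B : Fin m → Fin n → ℝ | (∀ i j, |B i j| ≤ N) ∧
        ∃ l : Fin m → ℤ, ∀ i, |(∑ j, (q j:ℝ) * B i j) + l i| < ε}
      ⊆ Set.univ.pi (fun _ : Fin m =>
        {b : Fin n → ℝ | (∀ j, |b j| ≤ N) ∧ ∃ c : ℤ, |(∑ j, (q j:ℝ) * b j) + c| < ε}) := by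
    rintro B ⟨hbox, l, hl⟩ i -
    exact ⟨fun j => hbox i j, l i, hl i⟩
  refine le_trans (measure_mono hset) ?_
  rw [volume_pi, Measure.pi_pi]
  calc ∏ _i : Fin m,
        volume {b : Fin n → ℝ | (∀ j, |b j| ≤ N) ∧ ∃ c : ℤ, |(∑ j, (q j:ℝ) * b j) + c| < ε}
      ≤ ∏ _i : Fin m, ENNReal.ofReal ((2*N*n+3) * (2 * (2*N)^(n-1)) * ε) :=
        Finset.prod_le_prod' (fun i _ => rowBad_measure hn q hq hε0 hε1 N)
    _ = ENNReal.ofReal (((2*N*n+3) * (2 * (2*N)^(n-1)))^m * ε^m) := by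
        rw [Finset.prod_const, Finset.card_univ, Fintype.card_fin,
          ← ENNReal.ofReal_pow (by positivity), mul_pow]

lemma rowInt_null {n : ℕ} (hn : 1 ≤ n) (q : Fin n → ℤ) (hq : q ≠ 0) :
    volume {b : Fin n → ℝ | ∃ c : ℤ, (∑ j, (q j:ℝ) * b j) + c = 0} = 0 := by
  classical
  obtain ⟨j₀, hj₀⟩ := Function.ne_iff.1 hq
  have hj₀' : q j₀ ≠ 0 := by simpa using hj₀
  have hdet : LinearMap.det (shearMap q j₀) ≠ 0 := by
    rw [shearMap_det]; exact_mod_cast hj₀'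
  have hsub : {b : Fin n → ℝ | ∃ c : ℤ, (∑ j, (q j:ℝ) * b j) + c = 0}
      ⊆ ⋃ c : ℤ, (shearMap q j₀) ⁻¹' {x : Fin n → ℝ | x j₀ = -(c:ℝ)} := by
    rintro b ⟨c, hc⟩
    refine Set.mem_iUnion.2 ⟨c, ?_⟩
    rw [Set.mem_preimage]
    show shearMap q j₀ b j₀ = -(c:ℝ)
    rw [shearMap_apply_self]
    linarith
  refine measure_mono_null hsub (measure_iUnion_null (fun c => ?_))
  rw [Measure.addHaar_preimage_linearMap volume hdet]
  have hzero : volume {x : Fin n → ℝ | x j₀ = -(c:ℝ)} = 0 := by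
    have hEq : {x : Fin n → ℝ | x j₀ = -(c:ℝ)}
        = Set.univ.pi (fun j => if j = j₀ then ({-(c:ℝ)} : Set ℝ) else Set.univ) := by
      ext x
      simp only [Set.mem_setOf_eq, Set.mem_pi, Set.mem_univ, forall_true_left]
      constructor
      · intro h j
        by_cases hj : j = j₀
        · subst hj; simp [h]
        · simp [hj]
      · intro h
        have := h j₀
        simpa using this
    rw [hEq, volume_pi, Measure.pi_pi]
    refine Finset.prod_eq_zero (Finset.mem_univ j₀) ?_
    simp
  rw [hzero, mul_zero]


lemma pow_sub_pow_le_real (a b : ℝ) (hb : 0 ≤ b) (hab : b ≤ a) (n : ℕ) :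
    a^n - b^n ≤ n * a^(n-1) * (a - b) := by
  have ha : 0 ≤ a := le_trans hb hab
  induction n with
  | zero => simp
  | succ n ih =>
    have h1 : a * (↑n * a ^ (n - 1) * (a - b)) ≤ ↑n * a ^ n * (a - b) := by
      rcases Nat.eq_zero_or_pos n with rfl | hn
      · simp
      · have hpow : a^(n-1) * a = a^n := by
          rw [← pow_succ]; congr 1; omega
        exact le_of_eq (by rw [← hpow]; ring)
    have h2 : (a-b)*b^n ≤ (a-b)*a^n :=
      mul_le_mul_of_nonneg_left (pow_le_pow_left₀ hb hab n) (by linarith)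
    have h3 : a*(a^n - b^n) ≤ a*(↑n * a^(n-1)*(a-b)) :=
      mul_le_mul_of_nonneg_left ih ha
    have hfin : (↑(n+1) : ℝ) * a^(n+1-1) * (a-b) = ↑n * a^n * (a-b) + (a-b)*a^n := by
      push_cast
      ring
    calc a^(n+1) - b^(n+1) = a*(a^n - b^n) + (a-b)*b^n := by ring
      _ ≤ ↑n * a^n * (a-b) + (a-b)*a^n := by linarith
      _ = (↑(n+1)) * a^(n+1-1) * (a-b) := hfin.symm

lemma log_three_gt_one : (1:ℝ) < Real.log 3 := by
  have h : Real.exp 1 < 3 := lt_trans Real.exp_one_lt_d9 (by norm_num)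
  calc (1:ℝ) = Real.log (Real.exp 1) := (Real.log_exp 1).symm
    _ < Real.log 3 := Real.log_lt_log (Real.exp_pos 1) h

section Summab
variable {f : ℝ → ℝ} {n : ℕ}

lemma hlog_aux (hn : 1 ≤ n) {r : ℕ} (hr : 3 ≤ r) : 1 < (n:ℝ) * Real.log r := by
  have h3 : (3:ℝ) ≤ r := by exact_mod_cast hr
  have hl3 : (1:ℝ) < Real.log r :=
    lt_of_lt_of_le log_three_gt_one (Real.log_le_log (by norm_num) h3)
  have hn1 : (1:ℝ) ≤ n := by exact_mod_cast hn
  nlinarith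

lemma g1_summable (hn : 1 ≤ n) (hfpos : ∀ x > (0:ℝ), 0 < f x)
    (hfmono : MonotoneOn f (Set.Ioi 0))
    (hfsum : Summable fun k : ℕ => 1 / f (k + 1)) :
    Summable (fun r : ℕ => if 3 ≤ r then ((r:ℝ) * f (n * Real.log r))⁻¹ else 0) := by
  classical
  have hfp : ∀ r : ℕ, 3 ≤ r → 0 < f ((n:ℝ) * Real.log r) := fun r hr =>
    hfpos _ (lt_trans one_pos (hlog_aux hn hr))
  set v : ℕ → ℝ := fun r => ((r:ℝ) * f (n * Real.log r))⁻¹ with hv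
  have hgnonneg : ∀ r, 0 ≤ (if 3 ≤ r then v r else 0) := by
    intro r
    split_ifs with h
    · have hr0 : (0:ℝ) < r := by
        have : (3:ℝ) ≤ r := by exact_mod_cast h
        linarith
      exact inv_nonneg.2 (le_of_lt (mul_pos hr0 (hfp r h)))
    · exact le_rfl
  set κ : ℕ → ℕ := fun r => ⌊(n:ℝ) * Real.log r⌋₊ with hκ
  have hκ1 : ∀ r : ℕ, 3 ≤ r → 1 ≤ κ r := by
    intro r hr
    exact Nat.le_floor (by exact_mod_cast (hlog_aux hn hr).le)
  have hκle : ∀ r : ℕ, 3 ≤ r → (κ r : ℝ) ≤ (n:ℝ) * Real.log r := by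
    intro r hr
    exact Nat.floor_le (le_of_lt (lt_trans one_pos (hlog_aux hn hr)))
  have hκgt : ∀ r : ℕ, (n:ℝ) * Real.log r < κ r + 1 := fun r => Nat.lt_floor_add_one _
  have hfκpos : ∀ k : ℕ, 1 ≤ k → 0 < f k := by
    intro k hk
    refine hfpos _ ?_
    exact_mod_cast Nat.lt_of_lt_of_le Nat.zero_lt_one hk
  have hfκle : ∀ r : ℕ, 3 ≤ r → f (κ r : ℝ) ≤ f ((n:ℝ) * Real.log r) := by
    intro r hr
    refine hfmono ?_ ?_ (hκle r hr)
    · have := hκ1 r hr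
      simp only [Set.mem_Ioi]
      exact_mod_cast Nat.lt_of_lt_of_le Nat.zero_lt_one this
    · simp only [Set.mem_Ioi]
      exact lt_trans one_pos (hlog_aux hn hr)
  set Sf : ℝ := ∑' k : ℕ, 1 / f (k + 1) with hSf
  apply summable_of_sum_range_le hgnonneg (c := 3 * Sf)
  intro R
  set s : Finset ℕ := (Finset.range R).filter (fun r => 3 ≤ r) with hs
  have h1 : ∑ r ∈ Finset.range R, (if 3 ≤ r then v r else 0) = ∑ r ∈ s, v r :=
    (Finset.sum_filter _ _).symm
  have h2 : ∑ r ∈ s, v r = ∑ k ∈ s.image κ, ∑ r ∈ s.filter (fun r => κ r = k), v r :=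
    (Finset.sum_fiberwise_of_maps_to (fun x hx => Finset.mem_image_of_mem κ hx) _).symm
  have h3 : ∀ k ∈ s.image κ, ∑ r ∈ s.filter (fun r => κ r = k), v r ≤ 3 * (f (k:ℝ))⁻¹ := by
    intro k hk
    obtain ⟨r₀, hr₀s, hr₀κ⟩ := Finset.mem_image.1 hk
    have hr₀3 : 3 ≤ r₀ := (Finset.mem_filter.1 hr₀s).2
    have hk1 : 1 ≤ k := hr₀κ ▸ hκ1 r₀ hr₀3
    set a : ℝ := Real.exp ((k:ℝ) / n) with ha
    set b : ℝ := Real.exp (((k:ℝ) + 1) / n) with hb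
    have hn0 : (0:ℝ) < n := by exact_mod_cast hn
    have ha1 : (1:ℝ) ≤ a := Real.one_le_exp (by positivity)
    have hab : a ≤ b := Real.exp_le_exp.2 (by gcongr <;> linarith)
    have hsub : s.filter (fun r => κ r = k) ⊆ Finset.Ico ⌈a⌉₊ ⌈b⌉₊ := by
      intro r hr
      obtain ⟨hrs, hrκ⟩ := Finset.mem_filter.1 hr
      have hr3 : 3 ≤ r := (Finset.mem_filter.1 hrs).2
      have hrpos : (0:ℝ) < r := by
        have : (3:ℝ) ≤ r := by exact_mod_cast hr3
        linarith
      have hlow : a ≤ r := by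
        have h1 : (k:ℝ) ≤ (n:ℝ) * Real.log r := hrκ ▸ hκle r hr3
        have h2 : (k:ℝ) / n ≤ Real.log r := (div_le_iff₀ hn0).2 (by linarith [h1])
        calc a ≤ Real.exp (Real.log r) := Real.exp_le_exp.2 h2
          _ = r := Real.exp_log hrpos
      have hhigh : (r:ℝ) < b := by
        have h1 : (n:ℝ) * Real.log r < (k:ℝ) + 1 := hrκ ▸ hκgt r
        have h2 : Real.log r < ((k:ℝ) + 1) / n := (lt_div_iff₀ hn0).2 (by linarith)
        calc (r:ℝ) = Real.exp (Real.log r) := (Real.exp_log hrpos).symm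
          _ < b := Real.exp_lt_exp.2 h2
      rw [Finset.mem_Ico]
      exact ⟨Nat.ceil_le.2 hlow, Nat.lt_ceil.2 hhigh⟩
    have hcard : ((s.filter (fun r => κ r = k)).card : ℝ) ≤ b + 1 - a := by
      have h1 : (s.filter (fun r => κ r = k)).card ≤ ⌈b⌉₊ - ⌈a⌉₊ := by
        calc (s.filter (fun r => κ r = k)).card ≤ (Finset.Ico ⌈a⌉₊ ⌈b⌉₊).card :=
            Finset.card_le_card hsub
          _ = ⌈b⌉₊ - ⌈a⌉₊ := Nat.card_Ico _ _
      rcases le_or_gt ⌈b⌉₊ ⌈a⌉₊ with h | h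
      · have : (s.filter (fun r => κ r = k)).card = 0 := by omega
        rw [this]
        simp only [Nat.cast_zero]
        linarith
      · calc ((s.filter (fun r => κ r = k)).card : ℝ) ≤ ((⌈b⌉₊ - ⌈a⌉₊ : ℕ) : ℝ) :=
            Nat.cast_le.mpr h1
          _ = (⌈b⌉₊ : ℝ) - ⌈a⌉₊ := by
            rw [Nat.cast_sub (le_of_lt h)]
          _ ≤ b + 1 - a := by
            have hb1 : (⌈b⌉₊:ℝ) < b + 1 := Nat.ceil_lt_add_one (by positivity)
            have ha2 : (a:ℝ) ≤ ⌈a⌉₊ := Nat.le_ceil a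
            linarith
    have hpt : ∀ r ∈ s.filter (fun r => κ r = k), v r ≤ a⁻¹ * (f (k:ℝ))⁻¹ := by
      intro r hr
      obtain ⟨hrs, hrκ⟩ := Finset.mem_filter.1 hr
      have hr3 : 3 ≤ r := (Finset.mem_filter.1 hrs).2
      have hrpos : (0:ℝ) < r := by
        have : (3:ℝ) ≤ r := by exact_mod_cast hr3
        linarith
      have hlow : a ≤ r := by
        have h1 : (k:ℝ) ≤ (n:ℝ) * Real.log r := hrκ ▸ hκle r hr3
        have h2 : (k:ℝ) / n ≤ Real.log r := (div_le_iff₀ hn0).2 (by linarith)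
        calc a ≤ Real.exp (Real.log r) := Real.exp_le_exp.2 h2
          _ = r := Real.exp_log hrpos
      have hfkpos : 0 < f (k:ℝ) := hfκpos k hk1
      have hfle : f (k:ℝ) ≤ f ((n:ℝ) * Real.log r) := by
        have := hfκle r hr3
        rwa [hrκ] at this
      rw [hv]
      dsimp only
      rw [mul_inv]
      exact mul_le_mul (inv_anti₀ (by positivity) hlow)
        (inv_anti₀ hfkpos hfle) (inv_nonneg.2 (le_of_lt (hfp r hr3))) (by positivity)
    have hfkpos : 0 < f (k:ℝ) := hfκpos k hk1
    have hbnd : (b + 1 - a) * a⁻¹ ≤ 3 := by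
      have h1 : b * a⁻¹ = Real.exp (1 / n) := by
        rw [ha, hb, ← Real.exp_neg, ← Real.exp_add]
        congr 1
        field_simp; ring
      have h2 : Real.exp (1/(n:ℝ)) ≤ Real.exp 1 := Real.exp_le_exp.2 (by
        rw [div_le_one hn0]
        exact_mod_cast hn)
      have h3 : Real.exp 1 < 2.7182818286 := Real.exp_one_lt_d9
      have h4 : a⁻¹ ≤ 1 := inv_le_one_of_one_le₀ ha1
      have h5 : (0:ℝ) < a := by positivity
      have h6 : (b + 1 - a) * a⁻¹ = b * a⁻¹ + a⁻¹ - 1 := by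
        field_simp
      rw [h6, h1]
      nlinarith
    calc ∑ r ∈ s.filter (fun r => κ r = k), v r
        ≤ ∑ _r ∈ s.filter (fun r => κ r = k), a⁻¹ * (f (k:ℝ))⁻¹ := Finset.sum_le_sum hpt
      _ = ((s.filter (fun r => κ r = k)).card : ℝ) * (a⁻¹ * (f (k:ℝ))⁻¹) := by
          rw [Finset.sum_const, nsmul_eq_mul]
      _ ≤ (b + 1 - a) * (a⁻¹ * (f (k:ℝ))⁻¹) := by
          refine mul_le_mul_of_nonneg_right hcard (by positivity)
      _ = ((b + 1 - a) * a⁻¹) * (f (k:ℝ))⁻¹ := by ring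
      _ ≤ 3 * (f (k:ℝ))⁻¹ := mul_le_mul_of_nonneg_right hbnd (by positivity)
  have h4 : ∑ k ∈ s.image κ, (f (k:ℝ))⁻¹ ≤ Sf := by
    have hall1 : ∀ k ∈ s.image κ, 1 ≤ k := by
      intro k hk
      obtain ⟨r₀, hr₀s, hr₀κ⟩ := Finset.mem_image.1 hk
      exact hr₀κ ▸ hκ1 r₀ (Finset.mem_filter.1 hr₀s).2
    have hinj : ∀ x ∈ s.image κ, ∀ y ∈ s.image κ, x - 1 = y - 1 → x = y := by
      intro x hx y hy h
      have := hall1 x hx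
      have := hall1 y hy
      omega
    have heq : ∑ j ∈ (s.image κ).image (fun k : ℕ => k - 1), 1 / f ((j:ℝ) + 1)
        = ∑ k ∈ s.image κ, 1 / f (((k - 1 : ℕ):ℝ) + 1) := Finset.sum_image hinj
    have heq2 : ∀ k ∈ s.image κ, 1 / f (((k - 1 : ℕ):ℝ) + 1) = (f (k:ℝ))⁻¹ := by
      intro k hk
      have h1 := hall1 k hk
      rw [one_div]
      congr 2
      push_cast [Nat.cast_sub h1]
      ring
    calc ∑ k ∈ s.image κ, (f (k:ℝ))⁻¹
        = ∑ j ∈ (s.image κ).image (fun k : ℕ => k - 1), 1 / f ((j:ℝ) + 1) := by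
          rw [heq, Finset.sum_congr rfl heq2]
      _ ≤ Sf := Summable.sum_le_tsum _ (fun j _ => by
            have : 0 < f ((j:ℝ) + 1) := hfpos _ (by positivity)
            positivity) hfsum
  calc ∑ r ∈ Finset.range R, (if 3 ≤ r then v r else 0)
      = ∑ k ∈ s.image κ, ∑ r ∈ s.filter (fun r => κ r = k), v r := by rw [h1, h2]
    _ ≤ ∑ k ∈ s.image κ, 3 * (f (k:ℝ))⁻¹ := Finset.sum_le_sum h3
    _ = 3 * ∑ k ∈ s.image κ, (f (k:ℝ))⁻¹ := by rw [Finset.mul_sum]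
    _ ≤ 3 * Sf := by
        refine mul_le_mul_of_nonneg_left h4 (by norm_num)
end Summab


lemma card_Icc_int (t : ℕ) : (Finset.Icc (-(t:ℤ)) (t:ℤ)).card = 2*t+1 := by
  rw [Int.card_Icc]; omega

lemma h_summable {f : ℝ → ℝ} {n : ℕ} (hn : 1 ≤ n) (hfpos : ∀ x > (0:ℝ), 0 < f x)
    (hfmono : MonotoneOn f (Set.Ioi 0))
    (hfsum : Summable fun k : ℕ => 1 / f (k + 1)) :
    Summable (fun q : Fin n → ℤ =>
      if 3 ≤ qSup q then (((qSup q):ℝ)^n * f (n * Real.log (qSup q)))⁻¹ else 0) := by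
  classical
  have hne : Nonempty (Fin n) := ⟨⟨0, hn⟩⟩
  have hfp : ∀ r : ℕ, 3 ≤ r → 0 < f ((n:ℝ) * Real.log r) := fun r hr =>
    hfpos _ (lt_trans one_pos (hlog_aux hn hr))
  set g1 : ℕ → ℝ := fun r => if 3 ≤ r then ((r:ℝ) * f (n * Real.log r))⁻¹ else 0 with hg1
  have hg1sum : Summable g1 := g1_summable hn hfpos hfmono hfsum
  have hg1nonneg : ∀ r, 0 ≤ g1 r := by
    intro r
    simp only [hg1]
    split_ifs with h
    · have h3 : (3:ℝ) ≤ r := by exact_mod_cast h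
      have hr0 : (0:ℝ) < r := by linarith
      exact inv_nonneg.2 (le_of_lt (mul_pos hr0 (hfp r h)))
    · exact le_rfl
  set Sg : ℝ := ∑' r, g1 r with hSg
  set w : ℕ → ℝ := fun r => (((r:ℕ):ℝ)^n * f (n * Real.log r))⁻¹ with hw
  have hwnonneg : ∀ r, 3 ≤ r → 0 ≤ w r := by
    intro r hr
    have hr0 : (0:ℝ) < r := by
      have : (3:ℝ) ≤ r := by exact_mod_cast hr
      linarith
    exact inv_nonneg.2 (le_of_lt (mul_pos (by positivity) (hfp r hr)))
  have hFnonneg : ∀ q : Fin n → ℤ, 0 ≤ (if 3 ≤ qSup q then w (qSup q) else 0) := by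
    intro q
    split_ifs with h
    · exact hwnonneg _ h
    · exact le_rfl
  apply summable_of_sum_le hFnonneg (c := (2*(n:ℝ)*3^(n-1)) * Sg)
  intro u
  set s : Finset (Fin n → ℤ) := u.filter (fun q => 3 ≤ qSup q) with hs
  have h1 : ∑ q ∈ u, (if 3 ≤ qSup q then w (qSup q) else 0) = ∑ q ∈ s, w (qSup q) :=
    (Finset.sum_filter _ _).symm
  have h2 : ∑ q ∈ s, w (qSup q)
      = ∑ r ∈ s.image qSup, ∑ q ∈ s.filter (fun q => qSup q = r), w (qSup q) :=
    (Finset.sum_fiberwise_of_maps_to (fun x hx => Finset.mem_image_of_mem qSup hx) _).symm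
  have h3 : ∀ r ∈ s.image qSup,
      ∑ q ∈ s.filter (fun q => qSup q = r), w (qSup q) ≤ (2*(n:ℝ)*3^(n-1)) * g1 r := by
    intro r hr
    obtain ⟨q₀, hq₀s, hq₀⟩ := Finset.mem_image.1 hr
    have hr3 : 3 ≤ r := hq₀ ▸ (Finset.mem_filter.1 hq₀s).2
    have hr3' : (3:ℝ) ≤ r := by exact_mod_cast hr3
    have hr0 : (0:ℝ) < r := by linarith
    -- fiber is inside the shell
    have hsub : s.filter (fun q => qSup q = r)
        ⊆ (Fintype.piFinset (fun _ : Fin n => Finset.Icc (-(r:ℤ)) (r:ℤ))) \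
          (Fintype.piFinset (fun _ : Fin n => Finset.Icc (-((r-1:ℕ):ℤ)) ((r-1:ℕ):ℤ))) := by
      intro q hq
      obtain ⟨hqs, hqr⟩ := Finset.mem_filter.1 hq
      rw [Finset.mem_sdiff]
      constructor
      · rw [Fintype.mem_piFinset]
        intro j
        have : (q j).natAbs ≤ r := hqr ▸ Finset.le_sup (f := fun j => (q j).natAbs)
          (Finset.mem_univ j)
        rw [Finset.mem_Icc]
        omega
      · rw [Fintype.mem_piFinset]
        push_neg
        obtain ⟨j₁, -, hj₁⟩ := Finset.exists_mem_eq_sup (Finset.univ : Finset (Fin n))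
          Finset.univ_nonempty (fun j => (q j).natAbs)
        have hj₁r : (q j₁).natAbs = r := by
          rw [← hj₁]; exact hqr
        refine ⟨j₁, ?_⟩
        rw [Finset.mem_Icc]
        omega
    have hcard : ((s.filter (fun q => qSup q = r)).card : ℝ)
        ≤ 2*(n:ℝ)*3^(n-1) * (r:ℝ)^(n-1) := by
      have hboxsub : (Fintype.piFinset (fun _ : Fin n => Finset.Icc (-((r-1:ℕ):ℤ)) ((r-1:ℕ):ℤ)))
          ⊆ (Fintype.piFinset (fun _ : Fin n => Finset.Icc (-(r:ℤ)) (r:ℤ))) := by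
        intro q hq
        rw [Fintype.mem_piFinset] at *
        intro j
        have := hq j
        rw [Finset.mem_Icc] at *
        omega
      have hc1 : (s.filter (fun q => qSup q = r)).card ≤ (2*r+1)^n - (2*(r-1)+1)^n := by
        calc (s.filter (fun q => qSup q = r)).card
            ≤ _ := Finset.card_le_card hsub
          _ = (2*r+1)^n - (2*(r-1)+1)^n := by
              rw [Finset.card_sdiff_of_subset hboxsub, Fintype.card_piFinset, Fintype.card_piFinset]
              simp only [card_Icc_int, Finset.prod_const, Finset.card_univ, Fintype.card_fin]
      have hc2 : ((2*r+1)^n - (2*(r-1)+1)^n : ℕ) = ((2*r+1)^n : ℕ) - ((2*r-1)^n : ℕ) := by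
        congr 2
        omega
      have hle : ((2*r-1)^n : ℕ) ≤ ((2*r+1)^n : ℕ) := Nat.pow_le_pow_left (by omega) n
      have hcastsub : (((2*r+1)^n - (2*r-1)^n : ℕ) : ℝ) = ((2*r+1 : ℕ):ℝ)^n - ((2*r-1 : ℕ):ℝ)^n := by
        push_cast [Nat.cast_sub hle]
        ring
      have hkey : ((2*(r:ℝ)+1)^n - (2*(r:ℝ)-1)^n : ℝ) ≤ 2*(n:ℝ)*3^(n-1) * (r:ℝ)^(n-1) := by
        have hb0 : (0:ℝ) ≤ 2*(r:ℝ)-1 := by linarith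
        have hab : (2*(r:ℝ)-1) ≤ 2*(r:ℝ)+1 := by linarith
        calc (2*(r:ℝ)+1)^n - (2*(r:ℝ)-1)^n
            ≤ (n:ℝ) * (2*(r:ℝ)+1)^(n-1) * ((2*(r:ℝ)+1) - (2*(r:ℝ)-1)) :=
              pow_sub_pow_le_real _ _ hb0 hab n
          _ = 2*(n:ℝ) * (2*(r:ℝ)+1)^(n-1) := by ring
          _ ≤ 2*(n:ℝ) * (3*(r:ℝ))^(n-1) := by
              refine mul_le_mul_of_nonneg_left (pow_le_pow_left₀ (by linarith) (by linarith) _)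
                (by positivity)
          _ = 2*(n:ℝ)*3^(n-1) * (r:ℝ)^(n-1) := by rw [mul_pow]; ring
      calc ((s.filter (fun q => qSup q = r)).card : ℝ)
          ≤ (((2*r+1)^n - (2*(r-1)+1)^n : ℕ) : ℝ) := Nat.cast_le.mpr hc1
        _ = ((2*r+1 : ℕ):ℝ)^n - ((2*r-1 : ℕ):ℝ)^n := by rw [hc2, hcastsub]
        _ = (2*(r:ℝ)+1)^n - (2*(r:ℝ)-1)^n := by
            have h3r : (1:ℕ) ≤ 2*r := by omega
            push_cast [Nat.cast_sub h3r]
            ring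
        _ ≤ 2*(n:ℝ)*3^(n-1) * (r:ℝ)^(n-1) := hkey
    have hwg : (r:ℝ)^(n-1) * w r = ((r:ℝ) * f (n * Real.log r))⁻¹ := by
      have hrpow : (r:ℝ)^n = (r:ℝ)^(n-1) * (r:ℝ) := by
        rw [← pow_succ]; congr 1; omega
      rw [hw]
      dsimp only
      rw [hrpow, show ((r:ℝ)^(n-1) * (r:ℝ)) * f (n * Real.log r)
          = (r:ℝ)^(n-1) * ((r:ℝ) * f (n * Real.log r)) by ring, mul_inv]
      rw [← mul_assoc, mul_inv_cancel₀ (by positivity), one_mul]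
    calc ∑ q ∈ s.filter (fun q => qSup q = r), w (qSup q)
        = ∑ q ∈ s.filter (fun q => qSup q = r), w r := by
          refine Finset.sum_congr rfl (fun q hq => ?_)
          rw [(Finset.mem_filter.1 hq).2]
      _ = ((s.filter (fun q => qSup q = r)).card : ℝ) * w r := by
          rw [Finset.sum_const, nsmul_eq_mul]
      _ ≤ (2*(n:ℝ)*3^(n-1) * (r:ℝ)^(n-1)) * w r :=
          mul_le_mul_of_nonneg_right hcard (hwnonneg r hr3)
      _ = (2*(n:ℝ)*3^(n-1)) * ((r:ℝ)^(n-1) * w r) := by ring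
      _ = (2*(n:ℝ)*3^(n-1)) * g1 r := by
          rw [hwg, hg1]
          simp only [if_pos hr3]
  calc ∑ q ∈ u, (if 3 ≤ qSup q then w (qSup q) else 0)
      = ∑ r ∈ s.image qSup, ∑ q ∈ s.filter (fun q => qSup q = r), w (qSup q) := by
        rw [h1, h2]
    _ ≤ ∑ r ∈ s.image qSup, (2*(n:ℝ)*3^(n-1)) * g1 r := Finset.sum_le_sum h3
    _ = (2*(n:ℝ)*3^(n-1)) * ∑ r ∈ s.image qSup, g1 r := by rw [Finset.mul_sum]
    _ ≤ (2*(n:ℝ)*3^(n-1)) * Sg := by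
        refine mul_le_mul_of_nonneg_left (Summable.sum_le_tsum _ (fun r _ => hg1nonneg r) hg1sum)
          (by positivity)

lemma neg_inv_rpow_pow {m : ℕ} (hm : 1 ≤ m) {x y : ℝ} (hx : 0 ≤ x) (hy : 0 ≤ y) :
    (x ^ (-(m:ℝ)⁻¹) * y ^ (-(m:ℝ)⁻¹))^m = (x*y)⁻¹ := by
  have hm0 : (m:ℝ) ≠ 0 := by positivity
  have hx1 : (x ^ (-(m:ℝ)⁻¹))^m = x⁻¹ := by
    rw [← Real.rpow_natCast (x ^ (-(m:ℝ)⁻¹)) m, ← Real.rpow_mul hx]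
    rw [show -(m:ℝ)⁻¹ * m = -1 by field_simp]
    exact Real.rpow_neg_one x
  have hy1 : (y ^ (-(m:ℝ)⁻¹))^m = y⁻¹ := by
    rw [← Real.rpow_natCast (y ^ (-(m:ℝ)⁻¹)) m, ← Real.rpow_mul hy]
    rw [show -(m:ℝ)⁻¹ * m = -1 by field_simp]
    exact Real.rpow_neg_one y
  rw [mul_pow, hx1, hy1, mul_inv]

lemma rpow_neg_inv_anti {m : ℕ} {a b : ℝ} (ha : 0 < a) (hab : a ≤ b) :
    b ^ (-(m:ℝ)⁻¹) ≤ a ^ (-(m:ℝ)⁻¹) := by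
  rw [Real.rpow_neg (le_of_lt ha), Real.rpow_neg (le_of_lt (lt_of_lt_of_le ha hab))]
  exact inv_anti₀ (Real.rpow_pos_of_pos ha _) (Real.rpow_le_rpow (le_of_lt ha) hab (by positivity))

lemma T_anti {f : ℝ → ℝ} (hfpos : ∀ x > (0:ℝ), 0 < f x) (hfmono : MonotoneOn f (Set.Ioi 0))
    {m : ℕ} {a b : ℝ} (ha : 3 ≤ a) (hab : a ≤ b) :
    b ^ (-(m:ℝ)⁻¹) * f (Real.log b) ^ (-(m:ℝ)⁻¹)
      ≤ a ^ (-(m:ℝ)⁻¹) * f (Real.log a) ^ (-(m:ℝ)⁻¹) := by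
  have ha0 : (0:ℝ) < a := by linarith
  have hb0 : (0:ℝ) < b := by linarith
  have hla : (0:ℝ) < Real.log a := lt_trans one_pos
    (lt_of_lt_of_le log_three_gt_one (Real.log_le_log (by norm_num) ha))
  have hlb : Real.log a ≤ Real.log b := Real.log_le_log ha0 hab
  have hfa : 0 < f (Real.log a) := hfpos _ hla
  have hfb : f (Real.log a) ≤ f (Real.log b) := hfmono hla (lt_of_lt_of_le hla hlb) hlb
  refine mul_le_mul (rpow_neg_inv_anti ha0 hab) (rpow_neg_inv_anti hfa hfb) ?_ ?_
  · exact Real.rpow_nonneg (by linarith) _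
  · exact Real.rpow_nonneg (le_of_lt ha0) _

lemma qSup_zero {n : ℕ} : qSup (0 : Fin n → ℤ) = 0 := by
  refine le_antisymm (Finset.sup_le fun j _ => ?_) (Nat.zero_le _)
  simp


lemma matInt_null {m n : ℕ} (hm : 1 ≤ m) (hn : 1 ≤ n) (q : Fin n → ℤ) (hq : q ≠ 0) :
    volume {B : Fin m → Fin n → ℝ | ∀ i, ∃ c : ℤ, (∑ j, (q j:ℝ) * B i j) + c = 0} = 0 := by
  have heq : {B : Fin m → Fin n → ℝ | ∀ i, ∃ c : ℤ, (∑ j, (q j:ℝ) * B i j) + c = 0}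
      = Set.univ.pi (fun _ : Fin m => {b : Fin n → ℝ | ∃ c : ℤ, (∑ j, (q j:ℝ) * b j) + c = 0}) := by
    ext B
    simp [Set.mem_pi]
  rw [heq, volume_pi, Measure.pi_pi]
  exact Finset.prod_eq_zero (Finset.mem_univ ⟨0, hm⟩) (rowInt_null hn q hq)

/-- **Theorem 1(c), lower bound.** If `f : ℝ_{>0} → ℝ_{>0}` is increasing with `∑ 1/f(k) < ∞`
and grows at most polynomially, then for almost every `m×n` real matrix `B` there is `Q₀ > 0`
such that for all `Q ≥ Q₀`,
`Q^{-1/m} (f(log Q))^{-1/m} < inf{γ_{(B;Q)}(Bk) : k ∈ ℤ^n ∩ (0, Q^{1/n}]^n}`. -/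
theorem gap_inf_lower_bound (m n : ℕ) (hm : 1 ≤ m) (hn : 1 ≤ n)
    (p : ℝ≥0∞) (hp : 1 ≤ p)
    (S : Set (Fin m → ℝ)) (hSne : S.Nonempty) (hSopen : IsOpenSubsetOfSphere S)
    (f : ℝ → ℝ) (hfpos : ∀ x > (0 : ℝ), 0 < f x) (hfmono : MonotoneOn f (Set.Ioi 0))
    (hfsum : Summable fun k : ℕ => 1 / f (k + 1))
    (hfpoly : ∃ k > (0 : ℝ), ∃ x₀ > (0 : ℝ), ∀ x ≥ x₀, f x ≤ x ^ k) :
    ∀ᵐ B : Fin m → Fin n → ℝ ∂volume, ∃ Q₀ > (0 : ℝ), ∀ Q ≥ Q₀,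
      ENNReal.ofReal (Q ^ (-(m : ℝ)⁻¹) * f (Real.log Q) ^ (-(m : ℝ)⁻¹))
        < ⨅ (k : Fin n → ℤ) (_ : ∀ i, 0 < (k i : ℝ) ∧ (k i : ℝ) ≤ Q ^ ((n : ℝ)⁻¹)),
            gap p S B Q (matVec B fun j => (k j : ℝ)) := by
  classical
  have hnem : Nonempty (Fin n) := ⟨⟨0, hn⟩⟩
  have hn0R : ((n:ℝ)) ≠ 0 := by positivity
  have hfp3 : ∀ r : ℕ, 3 ≤ r → 0 < f ((n:ℝ) * Real.log r) := fun r hr =>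
    hfpos _ (lt_trans one_pos (hlog_aux hn hr))
  set εf : ℕ → ℝ := fun r => (((r:ℕ):ℝ)^n) ^ (-(m:ℝ)⁻¹) * (f ((n:ℝ) * Real.log r)) ^ (-(m:ℝ)⁻¹)
    with hεf
  have hεfnn : ∀ r : ℕ, 3 ≤ r → 0 ≤ εf r := fun r hr =>
    mul_nonneg (Real.rpow_nonneg (by positivity) _)
      (Real.rpow_nonneg (le_of_lt (hfp3 r hr)) _)
  set ε' : ℕ → ℝ := fun r => min 1 (2 * εf r) with hε'
  have hε'nn : ∀ r : ℕ, 3 ≤ r → 0 ≤ ε' r := fun r hr =>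
    le_min zero_le_one (by nlinarith [hεfnn r hr])
  set bad : ℕ → (Fin n → ℤ) → Set (Fin m → Fin n → ℝ) := fun N q =>
    if 3 ≤ qSup q then
      {B : Fin m → Fin n → ℝ | (∀ i j, |B i j| ≤ N) ∧
        ∃ l : Fin m → ℤ, ∀ i, |(∑ j, (q j:ℝ) * B i j) + l i| < ε' (qSup q)}
    else ∅ with hbad
  have hqne : ∀ q : Fin n → ℤ, 1 ≤ qSup q → q ≠ 0 := by
    intro q h1 h0
    rw [h0, qSup_zero] at h1
    omega
  have hεfpow : ∀ r : ℕ, 3 ≤ r →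
      (εf r)^m = ((((r:ℕ)):ℝ)^n * f ((n:ℝ) * Real.log r))⁻¹ := fun r hr =>
    neg_inv_rpow_pow hm (by positivity) (le_of_lt (hfp3 r hr))
  have hsumq := h_summable (f := f) hn hfpos hfmono hfsum
  -- the series of measures of the bad sets converges
  have hbadsum : ∀ N : ℕ, ∑' q : Fin n → ℤ, volume (bad N q) ≠ ⊤ := by
    intro N
    set C : ℝ := ((2*(N:ℝ)*n+3) * (2 * (2*(N:ℝ))^(n-1)))^m * 2^m with hC
    have hC0 : 0 ≤ C := by positivity
    have hbound : ∀ q : Fin n → ℤ, volume (bad N q)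
        ≤ ENNReal.ofReal (C * (if 3 ≤ qSup q then
            (((qSup q):ℝ)^n * f (n * Real.log (qSup q)))⁻¹ else 0)) := by
      intro q
      by_cases h3 : 3 ≤ qSup q
      · rw [hbad]
        simp only [if_pos h3]
        have hq0 : q ≠ 0 := hqne q (by omega)
        have hwnn : (0:ℝ) ≤ (((qSup q):ℝ)^n * f (n * Real.log (qSup q)))⁻¹ :=
          inv_nonneg.2 (mul_nonneg (by positivity) (le_of_lt (hfp3 _ h3)))
        refine le_trans (matBad_measure hn q hq0 (hε'nn _ h3) (min_le_left _ _) N) ?_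
        apply ENNReal.ofReal_le_ofReal
        have h1 : (ε' (qSup q))^m ≤ 2^m * ((((qSup q):ℝ)^n * f (n * Real.log (qSup q)))⁻¹) := by
          calc (ε' (qSup q))^m ≤ (2 * εf (qSup q))^m :=
              pow_le_pow_left₀ (hε'nn _ h3) (min_le_right _ _) m
            _ = 2^m * (εf (qSup q))^m := mul_pow _ _ _
            _ = 2^m * ((((qSup q):ℝ)^n * f (n * Real.log (qSup q)))⁻¹) := by
                rw [hεfpow _ h3]
        calc ((2*(N:ℝ)*n+3) * (2 * (2*(N:ℝ))^(n-1)))^m * (ε' (qSup q))^m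
            ≤ ((2*(N:ℝ)*n+3) * (2 * (2*(N:ℝ))^(n-1)))^m
              * (2^m * ((((qSup q):ℝ)^n * f (n * Real.log (qSup q)))⁻¹)) :=
              mul_le_mul_of_nonneg_left h1 (by positivity)
          _ = C * (((qSup q):ℝ)^n * f (n * Real.log (qSup q)))⁻¹ := by
              rw [hC]; ring
      · rw [hbad]
        simp only [if_neg h3]
        simp
    refine ne_of_lt (lt_of_le_of_lt (ENNReal.tsum_le_tsum hbound) ?_)
    rw [← ENNReal.ofReal_tsum_of_nonneg]
    · exact ENNReal.ofReal_lt_top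
    · intro q
      by_cases h3 : 3 ≤ qSup q
      · simp only [if_pos h3]
        exact mul_nonneg hC0 (inv_nonneg.2 (mul_nonneg (by positivity)
          (le_of_lt (hfp3 _ h3))))
      · simp [if_neg h3]
    · exact hsumq.mul_left C
  have hBCall : ∀ᵐ B : Fin m → Fin n → ℝ ∂volume, ∀ N : ℕ,
      {q : Fin n → ℤ | B ∈ bad N q}.Finite :=
    ae_all_iff.2 (fun N => ae_finite_setOf_mem (hbadsum N))
  have hnull : ∀ᵐ B : Fin m → Fin n → ℝ ∂volume, ∀ q : Fin n → ℤ, q ≠ 0 →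
      ∃ i, ∀ c : ℤ, (∑ j, (q j:ℝ) * B i j) + c ≠ 0 := by
    rw [ae_all_iff]
    intro q
    by_cases hq : q = 0
    · exact Filter.Eventually.of_forall (fun B h => absurd hq h)
    · have h1 := measure_eq_zero_iff_ae_notMem.1 (matInt_null hm hn q hq)
      filter_upwards [h1] with B hB _
      have hB' : ¬ ∀ i, ∃ c : ℤ, (∑ j, (q j:ℝ) * B i j) + c = 0 := hB
      push_neg at hB'
      exact hB'
  filter_upwards [hBCall, hnull] with B hfin hint
  -- fix a box containing B
  set N : ℕ := ⌈∑ i, ∑ j, |B i j|⌉₊ with hNdef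
  have hBbox : ∀ i j, |B i j| ≤ (N:ℝ) := by
    intro i j
    have h1 : |B i j| ≤ ∑ j', |B i j'| :=
      Finset.single_le_sum (f := fun j' => |B i j'|) (fun j' _ => abs_nonneg _)
        (Finset.mem_univ j)
    have h2 : ∑ j', |B i j'| ≤ ∑ i', ∑ j', |B i' j'| :=
      Finset.single_le_sum (f := fun i' => ∑ j', |B i' j'|)
        (fun i' _ => Finset.sum_nonneg (fun j' _ => abs_nonneg _)) (Finset.mem_univ i)
    exact le_trans h1 (le_trans h2 (Nat.le_ceil _))
  -- exceptional set
  set E : Set (Fin n → ℤ) := {q | B ∈ bad N q} ∪ {q | 1 ≤ qSup q ∧ qSup q ≤ 2} with hE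
  have hEfin : E.Finite := by
    refine Set.Finite.union (hfin N) ?_
    refine Set.Finite.subset (Set.finite_Icc (fun _ : Fin n => (-2:ℤ)) (fun _ => 2)) ?_
    rintro q ⟨-, h2⟩
    have hj : ∀ j, (q j).natAbs ≤ 2 := fun j =>
      le_trans (Finset.le_sup (f := fun j => (q j).natAbs) (Finset.mem_univ j)) h2
    refine Set.mem_Icc.2 ⟨fun j => ?_, fun j => ?_⟩
    · show (-2:ℤ) ≤ q j
      have := hj j
      omega
    · show q j ≤ (2:ℤ)
      have := hj j
      omega
  have hE0 : ∀ q ∈ E, q ≠ 0 := by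
    intro q hq
    rcases hq with hq | hq
    · refine hqne q ?_
      by_contra h
      have h0 : qSup q ≤ 2 := by omega
      have : ¬ (3 ≤ qSup q) := by omega
      rw [hbad] at hq
      simp only [Set.mem_setOf_eq, if_neg this] at hq
      exact hq
    · exact hqne q hq.1
  -- positive distance from `Bq` to the integer lattice for each nonzero `q`
  have hkey : ∀ q : Fin n → ℤ, q ≠ 0 → ∃ d : ℝ, 0 < d ∧
      ∀ l : Fin m → ℤ, ∃ i, d ≤ |(∑ j, (q j:ℝ) * B i j) + l i| := by
    intro q hq
    obtain ⟨i, hi⟩ := hint q hq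
    set x : ℝ := ∑ j, (q j:ℝ) * B i j with hx
    have hfr : Int.fract x ≠ 0 := by
      intro h
      have h1 : x + (-⌊x⌋ : ℤ) = 0 := by
        rw [Int.fract] at h
        push_cast
        linarith
      exact hi (-⌊x⌋) h1
    have h0 : 0 < Int.fract x := lt_of_le_of_ne (Int.fract_nonneg x) (Ne.symm hfr)
    have h1 : Int.fract x < 1 := Int.fract_lt_one x
    exact ⟨min (Int.fract x) (1 - Int.fract x), lt_min h0 (by linarith),
      fun l => ⟨i, min_fract_le_abs x (l i)⟩⟩
  have hkey' : ∀ q : Fin n → ℤ, ∃ dq : ℝ, 0 < dq ∧ (q ≠ 0 → ∀ l : Fin m → ℤ,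
      ∃ i, dq ≤ |(∑ j, (q j:ℝ) * B i j) + l i|) := by
    intro q
    by_cases hq : q = 0
    · exact ⟨1, one_pos, fun h => absurd hq h⟩
    · obtain ⟨dq, h1, h2⟩ := hkey q hq
      exact ⟨dq, h1, fun _ => h2⟩
  choose d hd0 hdle using hkey'
  -- minimum over the exceptional set
  set G : Finset ℝ := insert 1 (hEfin.toFinset.image d) with hG
  have hGne : (1:ℝ) ∈ G := Finset.mem_insert_self 1 _
  set δ : ℝ := G.min' ⟨1, hGne⟩ with hδ
  have hδpos : 0 < δ := by
    have hmem := Finset.min'_mem G ⟨1, hGne⟩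
    have hpos : ∀ x ∈ G, 0 < x := by
      intro x hx
      rw [hG] at hx
      rcases Finset.mem_insert.1 hx with h | h
      · rw [h]; exact one_pos
      · obtain ⟨q, -, hq⟩ := Finset.mem_image.1 h
        rw [← hq]
        exact hd0 q
    exact hpos _ hmem
  have hδ1 : δ ≤ 1 := Finset.min'_le G 1 hGne
  have hδle : ∀ q ∈ E, δ ≤ d q := fun q hq =>
    Finset.min'_le G _ (Finset.mem_insert_of_mem
      (Finset.mem_image_of_mem d (hEfin.mem_toFinset.2 hq)))
  have hf1 : 0 < f 1 := hfpos 1 one_pos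
  -- the threshold Q₀
  refine ⟨max 3 ((f 1)⁻¹ * (δ⁻¹)^m + 1),
    lt_of_lt_of_le (by norm_num) (le_max_left _ _), ?_⟩
  intro Q hQ
  have hQ3 : (3:ℝ) ≤ Q := le_trans (le_max_left _ _) hQ
  have hQpos : (0:ℝ) < Q := by linarith
  have hlogQ : 1 < Real.log Q :=
    lt_of_lt_of_le log_three_gt_one (Real.log_le_log (by norm_num) hQ3)
  have hfQ : 0 < f (Real.log Q) := hfpos _ (by linarith)
  set T : ℝ := Q ^ (-(m:ℝ)⁻¹) * f (Real.log Q) ^ (-(m:ℝ)⁻¹) with hT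
  have hTpos : 0 < T := mul_pos (Real.rpow_pos_of_pos hQpos _) (Real.rpow_pos_of_pos hfQ _)
  have hTm : T^m = (Q * f (Real.log Q))⁻¹ :=
    neg_inv_rpow_pow hm (le_of_lt hQpos) (le_of_lt hfQ)
  -- T < δ
  have hTδ : T < δ := by
    have h1 : (f 1)⁻¹ * (δ⁻¹)^m < Q :=
      lt_of_lt_of_le (lt_add_one _) (le_trans (le_max_right _ _) hQ)
    have hf1le : f 1 ≤ f (Real.log Q) :=
      hfmono (Set.mem_Ioi.2 one_pos) (Set.mem_Ioi.2 (by linarith)) (le_of_lt hlogQ)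
    have h2 : (δ⁻¹)^m < Q * f 1 := by
      have := mul_lt_mul_of_pos_right h1 hf1
      rwa [mul_comm ((f 1)⁻¹) _, mul_assoc, inv_mul_cancel₀ (ne_of_gt hf1), mul_one] at this
    have hTmlt : T^m < δ^m := by
      rw [hTm]
      calc (Q * f (Real.log Q))⁻¹ ≤ (Q * f 1)⁻¹ :=
          inv_anti₀ (mul_pos hQpos hf1) (mul_le_mul_of_nonneg_left hf1le (le_of_lt hQpos))
        _ < ((δ⁻¹)^m)⁻¹ := inv_strictAnti₀ (by positivity) h2
        _ = δ^m := by rw [← inv_pow, inv_inv]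
    exact lt_of_pow_lt_pow_left₀ m (le_of_lt hδpos) hTmlt
  set bQ : ℝ := min δ (2 * T) with hbQ
  have hbQ0 : 0 < bQ := lt_min hδpos (by linarith)
  have hTltb : T < bQ := lt_min hTδ (by linarith)
  refine lt_of_lt_of_le ((ENNReal.ofReal_lt_ofReal_iff hbQ0).2 hTltb) ?_
  refine le_iInf fun k => le_iInf fun hk => ?_
  rw [gap]
  refine le_iInf fun k' => le_iInf fun hk' => le_iInf fun l => le_iInf fun hcone => ?_
  apply ENNReal.ofReal_le_ofReal
  -- the integer difference vector
  set q : Fin n → ℤ := k' - k with hqdef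
  set X : Fin m → ℝ := matVec B (fun j => ((k' j : ℤ) : ℝ)) + (fun i => ((l i : ℤ) : ℝ))
    - matVec B (fun j => ((k j : ℤ) : ℝ)) with hX
  have hXcoord : ∀ i, X i = (∑ j, (q j:ℝ) * B i j) + l i := by
    intro i
    rw [hX]
    simp only [Pi.add_apply, Pi.sub_apply, matVec]
    have hsum : ∑ j, (q j:ℝ) * B i j
        = ∑ j, B i j * (k' j:ℝ) - ∑ j, B i j * (k j:ℝ) := by
      rw [← Finset.sum_sub_distrib]
      refine Finset.sum_congr rfl (fun j _ => ?_)
      have : ((q j:ℤ):ℝ) = ((k' j:ℤ):ℝ) - ((k j:ℤ):ℝ) := by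
        rw [hqdef]
        push_cast [Pi.sub_apply]
        ring
      rw [this]
      ring
    rw [hsum]
    ring
  by_cases hq0 : q = 0
  · -- the vector is a nonzero integer vector: norm at least 1
    have hXne : X ≠ 0 := cone_ne_zero hSopen hcone
    obtain ⟨i, hi⟩ := Function.ne_iff.1 hXne
    have hXi : X i = (l i : ℝ) := by
      rw [hXcoord i, hq0]
      simp
    have hli : l i ≠ 0 := by
      intro h
      apply hi
      rw [hXi, h]
      simp
    have h1 : (1:ℝ) ≤ |X i| := by
      rw [hXi, ← Int.cast_abs]
      exact_mod_cast Int.one_le_abs hli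
    calc bQ ≤ δ := min_le_left _ _
      _ ≤ 1 := hδ1
      _ ≤ |X i| := h1
      _ ≤ lpNorm p X := abs_coord_le_lpNorm p hp X i
  · by_cases hqE : q ∈ E
    · obtain ⟨i, hi⟩ := hdle q hq0 l
      calc bQ ≤ δ := min_le_left _ _
        _ ≤ d q := hδle q hqE
        _ ≤ |(∑ j, (q j:ℝ) * B i j) + l i| := hi
        _ = |X i| := by rw [hXcoord i]
        _ ≤ lpNorm p X := abs_coord_le_lpNorm p hp X i
    · -- main Borel–Cantelli branch
      have hq1 : 1 ≤ qSup q := one_le_qSup hq0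
      have hq3 : 3 ≤ qSup q := by
        by_contra h
        exact hqE (Or.inr ⟨hq1, by omega⟩)
      have hnotbad : B ∉ bad N q := fun h => hqE (Or.inl h)
      rw [hbad] at hnotbad
      simp only [if_pos hq3] at hnotbad
      have hex : ∀ l' : Fin m → ℤ, ∃ i, ε' (qSup q) ≤ |(∑ j, (q j:ℝ) * B i j) + l' i| := by
        intro l'
        by_contra h
        push_neg at h
        exact hnotbad ⟨hBbox, l', h⟩
      obtain ⟨i, hi⟩ := hex l
      -- compare T with εf (qSup q)
      have hcast : ∀ j, |(q j:ℝ)| ≤ Q ^ ((n:ℝ)⁻¹) := by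
        intro j
        obtain ⟨hk1, hk2⟩ := hk j
        obtain ⟨hk1', hk2'⟩ := hk' j
        have hz : (1:ℤ) ≤ k j := by exact_mod_cast hk1
        have hz' : (1:ℤ) ≤ k' j := by exact_mod_cast hk1'
        have hz1 : (1:ℝ) ≤ (k j:ℝ) := by exact_mod_cast hz
        have hz1' : (1:ℝ) ≤ (k' j:ℝ) := by exact_mod_cast hz'
        have hqj : ((q j:ℤ):ℝ) = ((k' j:ℤ):ℝ) - ((k j:ℤ):ℝ) := by
          rw [hqdef]
          push_cast [Pi.sub_apply]
          ring
        rw [hqj]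
        rw [abs_le]
        constructor <;> linarith
      have hsupQ : ((qSup q : ℕ):ℝ) ≤ Q ^ ((n:ℝ)⁻¹) := by
        obtain ⟨j₁, -, hj₁⟩ := Finset.exists_mem_eq_sup (Finset.univ : Finset (Fin n))
          Finset.univ_nonempty (fun j => (q j).natAbs)
        have : ((qSup q : ℕ):ℝ) = |(q j₁:ℝ)| := by
          rw [qSup, hj₁]
          simp [Nat.cast_natAbs]
        rw [this]
        exact hcast j₁
      have hrQn : ((qSup q : ℕ):ℝ)^n ≤ Q := by
        calc ((qSup q:ℕ):ℝ)^n ≤ (Q ^ ((n:ℝ)⁻¹))^n :=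
            pow_le_pow_left₀ (Nat.cast_nonneg _) hsupQ n
          _ = Q := by
              rw [← Real.rpow_natCast (Q ^ ((n:ℝ)⁻¹)) n, ← Real.rpow_mul (le_of_lt hQpos),
                inv_mul_cancel₀ hn0R, Real.rpow_one]
      have hTεf : T ≤ εf (qSup q) := by
        have h3r : (3:ℝ) ≤ ((qSup q:ℕ):ℝ)^n := by
          have h3c : (3:ℝ) ≤ ((qSup q:ℕ):ℝ) := by exact_mod_cast hq3
          calc (3:ℝ) ≤ ((qSup q:ℕ):ℝ) := h3c
            _ = ((qSup q:ℕ):ℝ)^1 := (pow_one _).symm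
            _ ≤ ((qSup q:ℕ):ℝ)^n := pow_le_pow_right₀ (by linarith) hn
        have hanti := T_anti hfpos hfmono (m := m) h3r hrQn
        rw [Real.log_pow] at hanti
        rw [hT, hεf]
        exact hanti
      calc bQ ≤ min 1 (2 * εf (qSup q)) := by
            refine le_min (le_trans (min_le_left _ _) hδ1) ?_
            refine le_trans (min_le_right _ _) ?_
            nlinarith [hTεf]
        _ = ε' (qSup q) := by rw [hε']
        _ ≤ |(∑ j, (q j:ℝ) * B i j) + l i| := hi
        _ = |X i| := by rw [hXcoord i]
        _ ≤ lpNorm p X := abs_coord_le_lpNorm p hp X i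
end

section
/- Suppose that S ∪ (−S) equals the entire unit sphere of ℝ^m. Then there exists a constant C > 0 depending only on d = m + n and p such that for almost every m×n real matrix B there exists Q₀ > 0 with the property that for all Q ≥ Q₀ one has inf{γ_{(B;Q)}(Bk) : k ∈ ℤ^n ∩ (0, Q^{1/n}]^n} ≤ C · Q^{−1/m}. -/
open MeasureTheory
open scoped ENNReal

/-!
Dirichlet's pigeonhole argument. With `N = ⌊Q^{1/n}⌋` and `M ≍ Q^{1/m}` chosen so that
`M^m < N^n`, two of the points `Bk`, `k ∈ {1, …, N}^n`, fall into the same of the `M^m` boxes of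
side `1/M` of the torus `ℝ^m / ℤ^m`, giving `w = Bk₁ + l − Bk₂` with `‖w‖_∞ < 1/M`. For almost
every `B` there is no integer relation `Bδ + l = 0` with `δ ≠ 0` (each one cuts out a proper affine
subspace of matrices), so `w ≠ 0`. Since `S ∪ −S` is the whole sphere, `w` or `−w` lies in
`cone S`, bounding `γ` at `Bk₂` or at `Bk₁` by `‖w‖_p ≤ m^{1/p}/M ≲ Q^{−1/m}`.
-/


lemma lpNorm_le_card_rpow_mul_norm (p : ℝ≥0∞) [Fact (1 ≤ p)] {ι : Type*} [Fintype ι]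
    (x : ι → ℝ) : lpNorm p x ≤ (Fintype.card ι : ℝ) ^ (1 / p).toReal * ‖x‖ := by
  simpa [_root_.lpNorm] using (PiLp.lipschitzWith_toLp p fun _ : ι => ℝ).norm_le_mul (by simp) x

lemma lpNorm_neg (p : ℝ≥0∞) [Fact (1 ≤ p)] {ι : Type*} [Fintype ι] (x : ι → ℝ) :
    lpNorm p (-x) = lpNorm p x := by
  simp [_root_.lpNorm]

lemma euclNorm_eq_norm_toLp {ι : Type*} [Fintype ι] (x : ι → ℝ) :
    euclNorm x = ‖WithLp.toLp 2 x‖ := by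
  simp [euclNorm, EuclideanSpace.norm_eq]

lemma mem_cone_or_neg_mem_cone {m : ℕ} {S : Set (Fin m → ℝ)}
    (hS : S ∪ -S = {u | euclNorm u = 1}) {w : Fin m → ℝ} (hw : w ≠ 0) :
    w ∈ cone S ∨ -w ∈ cone S := by
  have hr : 0 < euclNorm w := by
    rw [euclNorm_eq_norm_toLp]; simpa using hw
  have hu : (euclNorm w)⁻¹ • w ∈ S ∪ -S := by
    rw [hS, Set.mem_ofPred_eq, euclNorm_eq_norm_toLp, WithLp.toLp_smul, norm_smul,
      ← euclNorm_eq_norm_toLp, norm_inv, Real.norm_of_nonneg hr.le, inv_mul_cancel₀ hr.ne']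
  rcases hu with hu | hu
  · exact .inl ⟨_, hu, euclNorm w, hr, by rw [smul_inv_smul₀ hr.ne']⟩
  · exact .inr ⟨_, hu, euclNorm w, hr, by rw [smul_neg, smul_inv_smul₀ hr.ne']⟩

lemma ae_matVec_ne {m n : ℕ} (hm : m ≠ 0) {x : Fin n → ℝ} (hx : x ≠ 0) (v : Fin m → ℝ) :
    ∀ᵐ B : Fin m → Fin n → ℝ, matVec B x ≠ v := by
  let L : (Fin m → Fin n → ℝ) →ₗ[ℝ] (Fin m → ℝ) :=
    { toFun := fun B => matVec B x
      map_add' := fun B₁ B₂ => by ext i; simp [matVec, add_mul, Finset.sum_add_distrib]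
      map_smul' := fun c B => by ext i; simp [matVec, Finset.mul_sum, mul_assoc] }
  let s := (affineSpan ℝ {v}).comap L.toAffineMap
  have hs : s ≠ ⊤ := by
    obtain ⟨j, hj⟩ := Function.ne_iff.mp hx
    intro htop
    have h₀ : (0 : Fin m → Fin n → ℝ) ∈ s := htop ▸ AffineSubspace.mem_top ℝ _ _
    have h₁ : (fun _ j' => if j' = j then 1 else 0 : Fin m → Fin n → ℝ) ∈ s :=
      htop ▸ AffineSubspace.mem_top ℝ _ _
    simp only [s, AffineSubspace.mem_comap, AffineSubspace.mem_affineSpan_singleton] at h₀ h₁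
    exact hj (by simpa [L, matVec] using congrFun (h₁.trans h₀.symm) ⟨0, Nat.pos_of_ne_zero hm⟩)
  refine ae_iff.2 (measure_mono_null (fun B hB => ?_) (Measure.addHaar_affineSubspace volume s hs))
  simpa [s, L] using hB

lemma ae_forall_matVec_intCast_add_sub_ne_zero {m n : ℕ} (hm : m ≠ 0) :
    ∀ᵐ B : Fin m → Fin n → ℝ, ∀ k₁ k₂ : Fin n → ℤ, k₁ ≠ k₂ → ∀ l : Fin m → ℤ,
      matVec B (fun j => (k₁ j : ℝ)) + (fun i => (l i : ℝ)) - matVec B (fun j => (k₂ j : ℝ))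
        ≠ 0 := by
  refine ae_all_iff.2 fun k₁ => ae_all_iff.2 fun k₂ => ?_
  rcases eq_or_ne k₁ k₂ with rfl | hk
  · exact ae_of_all _ fun _ h => (h rfl).elim
  have hx : (fun j => (k₁ j - k₂ j : ℝ)) ≠ 0 := by
    obtain ⟨j, hj⟩ := Function.ne_iff.mp hk
    exact Function.ne_iff.mpr ⟨j, by simpa [sub_eq_zero] using hj⟩
  filter_upwards [ae_all_iff.2 fun l : Fin m → ℤ => ae_matVec_ne hm hx (fun i => -(l i : ℝ))]
    with B hB _ l h
  refine hB l (funext fun i => ?_)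
  have := congrFun h i
  simp only [matVec, Pi.add_apply, Pi.sub_apply, Pi.zero_apply, mul_sub,
    Finset.sum_sub_distrib] at this ⊢
  linarith

lemma abs_sub_lt_inv_of_natFloor_mul_eq {a b : ℝ} {M : ℕ} (hM : 0 < M) (ha : 0 ≤ a) (hb : 0 ≤ b)
    (h : ⌊M * a⌋₊ = ⌊M * b⌋₊) : |a - b| < (M : ℝ)⁻¹ := by
  have hM' : (0 : ℝ) < M := by exact_mod_cast hM
  have hfloor : ⌊M * a⌋ = ⌊M * b⌋ := by
    rw [← Int.natCast_floor_eq_floor (by positivity), ← Int.natCast_floor_eq_floor (by positivity),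
      h]
  have := Int.abs_sub_lt_one_of_floor_eq_floor hfloor
  rwa [← mul_sub, abs_mul, abs_of_pos hM', ← lt_inv_mul_iff₀ hM', mul_one] at this

theorem exists_ne_norm_add_intCast_sub_lt {α ι : Type*} [Fintype α] [Fintype ι]
    (f : α → ι → ℝ) {M : ℕ} (hM : 0 < M) (hcard : M ^ Fintype.card ι < Fintype.card α) :
    ∃ a b, a ≠ b ∧ ∃ l : ι → ℤ, ‖f a + (fun i => (l i : ℝ)) - f b‖ < (M : ℝ)⁻¹ := by
  classical
  have hM' : (0 : ℝ) < M := by exact_mod_cast hM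
  let box : α → ι → Fin M := fun a i =>
    ⟨⌊M * Int.fract (f a i)⌋₊, (Nat.floor_lt (by positivity)).2 <| by
      simpa using mul_lt_mul_of_pos_left (Int.fract_lt_one (f a i)) hM'⟩
  obtain ⟨a, b, hab, hbox⟩ := Fintype.exists_ne_map_eq_of_card_lt box (by simpa using hcard)
  refine ⟨a, b, hab, fun i => ⌊f b i⌋ - ⌊f a i⌋, (pi_norm_lt_iff (by positivity)).2 fun i => ?_⟩
  have hw : f a i + ((⌊f b i⌋ - ⌊f a i⌋ : ℤ) : ℝ) - f b i =
      Int.fract (f a i) - Int.fract (f b i) := by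
    push_cast [Int.fract]; ring
  rw [Pi.sub_apply, Pi.add_apply, hw, Real.norm_eq_abs]
  exact abs_sub_lt_inv_of_natFloor_mul_eq hM (Int.fract_nonneg _) (Int.fract_nonneg _)
    (congrArg Fin.val (congrFun hbox i))

lemma lt_two_mul_natFloor {x : ℝ} (hx : 1 ≤ x) : x < 2 * ⌊x⌋₊ := by
  have h1 : (1 : ℝ) ≤ ⌊x⌋₊ := by exact_mod_cast (Nat.one_le_floor_iff x).2 hx
  linarith [Nat.lt_floor_add_one x]

lemma exists_dirichlet_box_counts {m n : ℕ} (hm : m ≠ 0) (hn : n ≠ 0) {Q : ℝ} (hQ : 4 ^ n ≤ Q) :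
    ∃ N M : ℕ, 0 < M ∧ M ^ m < N ^ n ∧ (N : ℝ) ≤ Q ^ (n : ℝ)⁻¹ ∧
      (M : ℝ)⁻¹ ≤ 2 * ((4 : ℝ) ^ n) ^ (m : ℝ)⁻¹ * Q ^ (-(m : ℝ)⁻¹) := by
  have hQ0 : 0 < Q := lt_of_lt_of_le (by positivity) hQ
  set x := Q ^ (n : ℝ)⁻¹
  set y := (Q / 4 ^ n) ^ (m : ℝ)⁻¹ with hy_def
  have hx : 1 ≤ x := Real.one_le_rpow (le_trans (one_le_pow₀ (by norm_num)) hQ) (by positivity)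
  have hy : 1 ≤ y := Real.one_le_rpow ((one_le_div (by positivity)).2 hQ) (by positivity)
  refine ⟨⌊x⌋₊, ⌊y⌋₊, Nat.floor_pos.2 hy, ?_, Nat.floor_le (by positivity), ?_⟩
  · have : (⌊y⌋₊ : ℝ) ^ m < (⌊x⌋₊ : ℝ) ^ n := calc
      (⌊y⌋₊ : ℝ) ^ m ≤ y ^ m := by gcongr; exact Nat.floor_le (by positivity)
      _ = Q / 4 ^ n := Real.rpow_inv_natCast_pow (by positivity) hm
      _ < Q / 2 ^ n := by gcongr; norm_num
      _ = (x / 2) ^ n := by rw [div_pow, Real.rpow_inv_natCast_pow hQ0.le hn]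
      _ < ⌊x⌋₊ ^ n := by gcongr; linarith [lt_two_mul_natFloor hx]
    exact_mod_cast this
  · calc (⌊y⌋₊ : ℝ)⁻¹ ≤ (y / 2)⁻¹ := by gcongr; linarith [lt_two_mul_natFloor hy]
      _ = 2 * ((4 : ℝ) ^ n) ^ (m : ℝ)⁻¹ * Q ^ (-(m : ℝ)⁻¹) := by
        rw [hy_def, Real.div_rpow hQ0.le (by positivity), Real.rpow_neg hQ0.le]
        field_simp

lemma iInf_gap_le_of_mem_cone (p : ℝ≥0∞) {m n : ℕ} (S : Set (Fin m → ℝ))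
    (B : Fin m → Fin n → ℝ) {Q : ℝ} {k₁ k₂ : Fin n → ℤ}
    (hk₁ : ∀ i, 0 < (k₁ i : ℝ) ∧ (k₁ i : ℝ) ≤ Q ^ ((n : ℝ)⁻¹))
    (hk₂ : ∀ i, 0 < (k₂ i : ℝ) ∧ (k₂ i : ℝ) ≤ Q ^ ((n : ℝ)⁻¹)) {l : Fin m → ℤ}
    (h : matVec B (fun j => (k₁ j : ℝ)) + (fun i => (l i : ℝ)) - matVec B (fun j => (k₂ j : ℝ))
      ∈ cone S) :
    (⨅ (k : Fin n → ℤ) (_ : ∀ i, 0 < (k i : ℝ) ∧ (k i : ℝ) ≤ Q ^ ((n : ℝ)⁻¹)),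
        gap p S B Q (matVec B fun j => (k j : ℝ))) ≤
      ENNReal.ofReal (lpNorm p (matVec B (fun j => (k₁ j : ℝ)) + (fun i => (l i : ℝ)) -
        matVec B (fun j => (k₂ j : ℝ)))) :=
  (iInf₂_le k₂ hk₂).trans <| (iInf₂_le k₁ hk₁).trans <| iInf₂_le l h

lemma iInf_gap_le_lpNorm (p : ℝ≥0∞) [Fact (1 ≤ p)] {m n : ℕ} {S : Set (Fin m → ℝ)}
    (hS : S ∪ -S = {u | euclNorm u = 1}) (B : Fin m → Fin n → ℝ) {Q : ℝ} {k₁ k₂ : Fin n → ℤ}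
    (hk₁ : ∀ i, 0 < (k₁ i : ℝ) ∧ (k₁ i : ℝ) ≤ Q ^ ((n : ℝ)⁻¹))
    (hk₂ : ∀ i, 0 < (k₂ i : ℝ) ∧ (k₂ i : ℝ) ≤ Q ^ ((n : ℝ)⁻¹)) {l : Fin m → ℤ}
    (hw : matVec B (fun j => (k₁ j : ℝ)) + (fun i => (l i : ℝ)) - matVec B (fun j => (k₂ j : ℝ))
      ≠ 0) :
    (⨅ (k : Fin n → ℤ) (_ : ∀ i, 0 < (k i : ℝ) ∧ (k i : ℝ) ≤ Q ^ ((n : ℝ)⁻¹)),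
        gap p S B Q (matVec B fun j => (k j : ℝ))) ≤
      ENNReal.ofReal (lpNorm p (matVec B (fun j => (k₁ j : ℝ)) + (fun i => (l i : ℝ)) -
        matVec B (fun j => (k₂ j : ℝ)))) := by
  rcases mem_cone_or_neg_mem_cone hS hw with h | h
  · exact iInf_gap_le_of_mem_cone p S B hk₁ hk₂ h
  · have hneg : -(matVec B (fun j => (k₁ j : ℝ)) + (fun i => (l i : ℝ)) -
        matVec B (fun j => (k₂ j : ℝ))) = matVec B (fun j => (k₂ j : ℝ)) +
          (fun i => ((-l) i : ℝ)) - matVec B (fun j => (k₁ j : ℝ)) := by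
      ext i; push_cast [Pi.neg_apply, Pi.add_apply, Pi.sub_apply]; ring
    rw [hneg] at h
    rw [← lpNorm_neg, hneg]
    exact iInf_gap_le_of_mem_cone p S B hk₂ hk₁ h

/-- **Theorem 1(c), upper bound.** If `S ∪ (−S)` is the whole unit sphere of `ℝ^m`, then there
is a constant `C > 0` depending only on `d = m + n` and `p` such that for almost every `m×n`
real matrix `B` there is `Q₀ > 0` with
`inf{γ_{(B;Q)}(Bk) : k ∈ ℤ^n ∩ (0, Q^{1/n}]^n} ≤ C · Q^{-1/m}` for all `Q ≥ Q₀`. -/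
theorem gap_inf_upper_bound (m n : ℕ) (hm : 1 ≤ m) (hn : 1 ≤ n)
    (p : ℝ≥0∞) (hp : 1 ≤ p) :
    ∃ C > (0 : ℝ), ∀ S : Set (Fin m → ℝ), S.Nonempty → IsOpenSubsetOfSphere S →
      S ∪ (-S) = {u : Fin m → ℝ | euclNorm u = 1} →
      ∀ᵐ B : Fin m → Fin n → ℝ ∂volume, ∃ Q₀ > (0 : ℝ), ∀ Q ≥ Q₀,
        (⨅ (k : Fin n → ℤ) (_ : ∀ i, 0 < (k i : ℝ) ∧ (k i : ℝ) ≤ Q ^ ((n : ℝ)⁻¹)),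
            gap p S B Q (matVec B fun j => (k j : ℝ)))
          ≤ ENNReal.ofReal (C * Q ^ (-(m : ℝ)⁻¹)) := by
  have : Fact (1 ≤ p) := ⟨hp⟩
  have hm₀ : m ≠ 0 := by omega
  refine ⟨(m : ℝ) ^ (1 / p).toReal * (2 * ((4 : ℝ) ^ n) ^ (m : ℝ)⁻¹),
    mul_pos (Real.rpow_pos_of_pos (by positivity) _) (by positivity), fun S _ _ hS => ?_⟩
  filter_upwards [ae_forall_matVec_intCast_add_sub_ne_zero hm₀] with B hB
  refine ⟨4 ^ n, by positivity, fun Q hQ => ?_⟩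
  obtain ⟨N, M, hM, hMN, hNQ, hMQ⟩ := exists_dirichlet_box_counts hm₀ (by omega) hQ
  let κ : (Fin n → Fin N) → Fin n → ℤ := fun k j => (k j : ℤ) + 1
  have hκ_inj : κ.Injective := fun a b h =>
    funext fun j => Fin.ext (by simpa [κ] using congrFun h j)
  have hκ (k : Fin n → Fin N) (j : Fin n) :
      0 < (κ k j : ℝ) ∧ (κ k j : ℝ) ≤ Q ^ ((n : ℝ)⁻¹) := by
    refine ⟨by simp only [κ]; positivity, le_trans ?_ hNQ⟩
    simpa [κ] using (Nat.cast_le (α := ℝ)).2 (k j).isLt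
  obtain ⟨a, b, hab, l, hl⟩ := exists_ne_norm_add_intCast_sub_lt
    (fun k => matVec B fun j => (κ k j : ℝ)) hM (by simpa using hMN)
  calc _ ≤ _ := iInf_gap_le_lpNorm p hS B (hκ a) (hκ b) (hB _ _ (hκ_inj.ne hab) l)
    _ ≤ ENNReal.ofReal ((m : ℝ) ^ (1 / p).toReal * (M : ℝ)⁻¹) := by
      gcongr
      simpa using (lpNorm_le_card_rpow_mul_norm p _).trans
        (mul_le_mul_of_nonneg_left hl.le (by positivity))
    _ ≤ _ := by rw [mul_assoc]; gcongr
end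

section
/- Let f : ℝ_{>0} → ℝ_{>0} be an increasing function with ∑_{k=1}^∞ 1/f(k) < ∞ which grows at most polynomially (there exist k > 0 and x₀ > 0 with f(x) ≤ x^k for all x ≥ x₀), and let φ : ℝ_{>0} → ℝ_{>0} be a decreasing function satisfying φ(Q) ≤ Q^{−1} (f(log Q))^{−1/m} for all Q > 0. Then for almost every m×n real matrix B there exists Q₀ > 0 such that for every Q ≥ Q₀ there exists N₀ (depending on Q) such that for every integer N ≥ N₀ there is a residue class c ∈ ℤ^d modulo N containing no pair (n, m) ∈ ℤ^n × ℤ^m with ‖Bn − m‖_∞^m < N^m φ(Q) and ‖n‖_∞^n < (N/2)^n Q. -/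
/-!
The argument works for every `B`. Put `R = (N/2) Q^{1/n}` and `r = N φ(Q)^{1/m}`. Each
solution `(a, b)` has `a` in a cube of side `2R` and `b` in a cube of side `2r` centred at
`B a`, so there are at most `(2R+1)^n (2r+1)^m ≤ (3/2)^n 3^m Q φ(Q) N^d` of them once
`R, r ≥ 1`. Summability of `1/f(k)` forces `f → ∞`, hence `Q φ(Q) ≤ f(log Q)^{-1/m} → 0`; for
large `Q` the solutions are therefore fewer than the `N^d` residue classes modulo `N`, and one
class contains none.
-/

open MeasureTheory
open scoped ENNReal

open Filter Topology

theorem ZMod.intCast_eq_of_dvd_sub_val {N : ℕ} [NeZero N] {x : ℤ} {v : ZMod N}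
    (h : (N : ℤ) ∣ x - v.val) : (x : ZMod N) = v := by
  simpa using ((ZMod.intCast_eq_intCast_iff_dvd_sub (v.val : ℤ) x N).2 h).symm

theorem exists_residueClass_avoiding_of_card_lt {ι κ : Type*} [Fintype ι] [Fintype κ]
    (N : ℕ) [NeZero N] (S : Finset ((ι → ℤ) × (κ → ℤ)))
    (hS : S.card < N ^ (Fintype.card ι + Fintype.card κ)) :
    ∃ c₁ : ι → ℤ, ∃ c₂ : κ → ℤ, ∀ p ∈ S,
      ¬((∀ j, (N : ℤ) ∣ p.1 j - c₁ j) ∧ ∀ i, (N : ℤ) ∣ p.2 i - c₂ i) := by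
  classical
  let reduce : (ι → ℤ) × (κ → ℤ) → (ι → ZMod N) × (κ → ZMod N) :=
    Prod.map (fun a j => a j) (fun b i => b i)
  have hcard :
      (S.image reduce).card < (Finset.univ : Finset ((ι → ZMod N) × (κ → ZMod N))).card := by
    simpa [Fintype.card_prod, Fintype.card_fun, ZMod.card, pow_add] using
      Finset.card_image_le.trans_lt hS
  obtain ⟨c, -, hc⟩ := Finset.exists_mem_notMem_of_card_lt_card hcard
  refine ⟨fun j => (c.1 j).val, fun i => (c.2 i).val, fun p hp ⟨h₁, h₂⟩ => hc ?_⟩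
  refine Finset.mem_image.2 ⟨p, hp, Prod.ext (funext fun j => ?_) (funext fun i => ?_)⟩
  · exact ZMod.intCast_eq_of_dvd_sub_val (h₁ j)
  · exact ZMod.intCast_eq_of_dvd_sub_val (h₂ i)

theorem Int.mem_Icc_neg_floor_floor_of_abs_lt {x : ℤ} {R : ℝ} (h : |(x : ℝ)| < R) :
    x ∈ Finset.Icc (-⌊R⌋) ⌊R⌋ := by
  rw [abs_lt] at h
  rw [Finset.mem_Icc, neg_le, Int.le_floor, Int.le_floor]
  push_cast
  constructor <;> linarith

theorem Int.sub_ceil_mem_Icc_of_abs_sub_lt {b : ℤ} {y r : ℝ} (h : |y - b| < r) :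
    b - ⌈y - r⌉ ∈ Finset.Icc 0 ⌊2 * r⌋ := by
  rw [abs_lt] at h
  have hceil := Int.le_ceil (y - r)
  rw [Finset.mem_Icc, sub_nonneg, Int.ceil_le, Int.le_floor]
  push_cast
  constructor <;> linarith

theorem Int.card_Icc_neg_floor_floor_le {R : ℝ} (hR : 0 ≤ R) :
    ((Finset.Icc (-⌊R⌋) ⌊R⌋).card : ℝ) ≤ 2 * R + 1 := by
  have hfloor := Int.floor_nonneg.2 hR
  rw [Int.card_Icc, ← Int.cast_natCast, Int.toNat_of_nonneg (by omega)]
  push_cast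
  linarith [Int.floor_le R]

theorem Int.card_Icc_zero_floor_le {s : ℝ} (hs : 0 ≤ s) :
    ((Finset.Icc 0 ⌊s⌋).card : ℝ) ≤ s + 1 := by
  have hfloor := Int.floor_nonneg.2 hs
  rw [Int.card_Icc, ← Int.cast_natCast, Int.toNat_of_nonneg (by omega)]
  push_cast
  linarith [Int.floor_le s]

def approxSolutions {m n : ℕ} (B : Fin m → Fin n → ℝ) (R r : ℝ) :
    Set ((Fin n → ℤ) × (Fin m → ℤ)) :=
  {p | ‖fun j => (p.1 j : ℝ)‖ < R ∧ ‖fun i => matVec B (fun j => (p.1 j : ℝ)) i - p.2 i‖ < r}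

theorem exists_finset_card_le_and_approxSolutions_subset {m n : ℕ} (B : Fin m → Fin n → ℝ)
    {R r : ℝ} (hR : 0 ≤ R) (hr : 0 ≤ r) :
    ∃ S : Finset ((Fin n → ℤ) × (Fin m → ℤ)),
      approxSolutions B R r ⊆ S ∧ (S.card : ℝ) ≤ (2 * R + 1) ^ n * (2 * r + 1) ^ m := by
  classical
  let box : Finset ((Fin n → ℤ) × (Fin m → ℤ)) :=
    Finset.Icc (fun _ => -⌊R⌋) (fun _ => ⌊R⌋) ×ˢ Finset.Icc 0 (fun _ => ⌊2 * r⌋)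
  -- `b` ranges over an interval of length `2 r` around `B a`; shifting it by `⌈B a - r⌉` makes the
  -- box independent of `a`.
  let shift (p : (Fin n → ℤ) × (Fin m → ℤ)) : (Fin n → ℤ) × (Fin m → ℤ) :=
    (p.1, fun i => p.2 i + ⌈matVec B (fun j => (p.1 j : ℝ)) i - r⌉)
  refine ⟨box.image shift, ?_, ?_⟩
  · rintro ⟨a, b⟩ ⟨ha, hb⟩
    have ha' j := Finset.mem_Icc.1 <|
      Int.mem_Icc_neg_floor_floor_of_abs_lt ((norm_le_pi_norm (fun j => (a j : ℝ)) j).trans_lt ha)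
    have hb' i := Finset.mem_Icc.1 <| Int.sub_ceil_mem_Icc_of_abs_sub_lt <|
      (norm_le_pi_norm (fun i => matVec B (fun j => (a j : ℝ)) i - b i) i).trans_lt hb
    refine Finset.mem_image.2 ⟨(a, fun i => b i - ⌈matVec B (fun j => (a j : ℝ)) i - r⌉), ?_,
      by simp [shift]⟩
    exact Finset.mem_product.2 ⟨Finset.mem_Icc.2 ⟨fun j => (ha' j).1, fun j => (ha' j).2⟩,
      Finset.mem_Icc.2 ⟨fun i => (hb' i).1, fun i => (hb' i).2⟩⟩
  · calc ((box.image shift).card : ℝ) ≤ box.card := by exact_mod_cast Finset.card_image_le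
      _ = ((Finset.Icc (-⌊R⌋) ⌊R⌋).card : ℝ) ^ n * ((Finset.Icc 0 ⌊2 * r⌋).card : ℝ) ^ m := by
        simp [box, Finset.card_product, Pi.card_Icc]
      _ ≤ (2 * R + 1) ^ n * (2 * r + 1) ^ m := by
        gcongr
        · exact Int.card_Icc_neg_floor_floor_le hR
        · exact Int.card_Icc_zero_floor_le (by positivity)

theorem exists_residueClass_avoiding_approxSolutions {m n : ℕ} (B : Fin m → Fin n → ℝ)
    (N : ℕ) [NeZero N] {R r : ℝ} (hR : 1 ≤ R) (hr : 1 ≤ r)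
    (h : 3 ^ n * R ^ n * (3 ^ m * r ^ m) < (N : ℝ) ^ (n + m)) :
    ∃ c₁ : Fin n → ℤ, ∃ c₂ : Fin m → ℤ, ∀ p ∈ approxSolutions B R r,
      ¬((∀ j, (N : ℤ) ∣ p.1 j - c₁ j) ∧ ∀ i, (N : ℤ) ∣ p.2 i - c₂ i) := by
  obtain ⟨S, hsub, hcard⟩ :=
    exists_finset_card_le_and_approxSolutions_subset B (R := R) (r := r) (by linarith) (by linarith)
  have hS : S.card < N ^ (Fintype.card (Fin n) + Fintype.card (Fin m)) := by
    rw [Fintype.card_fin, Fintype.card_fin]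
    exact_mod_cast calc (S.card : ℝ) ≤ (2 * R + 1) ^ n * (2 * r + 1) ^ m := hcard
      _ ≤ (3 * R) ^ n * (3 * r) ^ m := by gcongr <;> linarith
      _ < (N : ℝ) ^ (n + m) := by rwa [mul_pow, mul_pow]
  obtain ⟨c₁, c₂, hc⟩ := exists_residueClass_avoiding_of_card_lt N S hS
  exact ⟨c₁, c₂, fun p hp => hc p (hsub hp)⟩

theorem tendsto_atTop_of_summable_one_div {f : ℝ → ℝ} (hfpos : ∀ x > 0, 0 < f x)
    (hfmono : MonotoneOn f (Set.Ioi 0)) (hfsum : Summable fun k : ℕ => 1 / f (k + 1)) :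
    Tendsto f atTop atTop := by
  have hseq : Tendsto (fun k : ℕ => f (k + 1)) atTop atTop := by
    have h : Tendsto (fun k : ℕ => 1 / f (k + 1)) atTop (𝓝[>] 0) :=
      tendsto_nhdsWithin_iff.2 ⟨hfsum.tendsto_atTop_zero,
        Eventually.of_forall fun k => one_div_pos.2 (hfpos _ (by positivity))⟩
    simpa [Pi.inv_def] using h.inv_tendsto_nhdsGT_zero
  refine tendsto_atTop.2 fun C => ?_
  obtain ⟨K, hK⟩ := (tendsto_atTop.1 hseq C).exists
  filter_upwards [eventually_ge_atTop ((K : ℝ) + 1)] with x hx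
  have hK1 : (0 : ℝ) < K + 1 := by positivity
  exact hK.trans (hfmono hK1 (hK1.trans_le hx) hx)

theorem eventually_mul_lt_of_le_inv_mul_rpow_neg {f φ : ℝ → ℝ} {s : ℝ} (hs : 0 < s)
    (hf : Tendsto f atTop atTop) (hφf : ∀ Q > 1, φ Q ≤ Q⁻¹ * f (Real.log Q) ^ (-s))
    {δ : ℝ} (hδ : 0 < δ) : ∀ᶠ Q in atTop, Q * φ Q < δ := by
  have hlim : Tendsto (fun Q => f (Real.log Q) ^ (-s)) atTop (𝓝 0) :=
    (tendsto_rpow_neg_atTop hs).comp (hf.comp Real.tendsto_log_atTop)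
  filter_upwards [hlim.eventually (gt_mem_nhds hδ), eventually_gt_atTop 1] with Q hQδ hQ
  calc Q * φ Q ≤ Q * (Q⁻¹ * f (Real.log Q) ^ (-s)) :=
        mul_le_mul_of_nonneg_left (hφf Q hQ) (by linarith)
    _ = f (Real.log Q) ^ (-s) := by field_simp
    _ < δ := hQδ

theorem eventually_exists_residueClass_avoiding {m n : ℕ} (hm : m ≠ 0) (hn : n ≠ 0)
    (B : Fin m → Fin n → ℝ) {Q ψ : ℝ} (hQ : 1 ≤ Q) (hψ : 0 < ψ)
    (hsmall : (3 / 2) ^ n * 3 ^ m * (Q * ψ) < 1) :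
    ∀ᶠ N : ℕ in atTop, ∃ c₁ : Fin n → ℤ, ∃ c₂ : Fin m → ℤ,
      ∀ a : Fin n → ℤ, ∀ b : Fin m → ℤ,
        (∀ j, (N : ℤ) ∣ (a j - c₁ j)) → (∀ i, (N : ℤ) ∣ (b i - c₂ i)) →
        ¬(‖(fun i => matVec B (fun j => (a j : ℝ)) i - (b i : ℝ))‖ ^ m < (N : ℝ) ^ m * ψ ∧
          ‖(fun j => (a j : ℝ))‖ ^ n < ((N : ℝ) / 2) ^ n * Q) := by
  set ε := ψ ^ (m : ℝ)⁻¹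
  set ρ := Q ^ (n : ℝ)⁻¹
  have hεm : ε ^ m = ψ := Real.rpow_inv_natCast_pow hψ.le hm
  have hρn : ρ ^ n = Q := Real.rpow_inv_natCast_pow (by linarith) hn
  have hε : 0 < ε := by positivity
  have hρ : 1 ≤ ρ := Real.one_le_rpow hQ (by positivity)
  filter_upwards [eventually_ge_atTop 2, eventually_ge_atTop ⌈ε⁻¹⌉₊] with N hN2 hNε
  have hN2 : (2 : ℝ) ≤ N := by exact_mod_cast hN2
  have hNε : ε⁻¹ ≤ N := (Nat.le_ceil _).trans (by exact_mod_cast hNε)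
  have : NeZero N := ⟨by rintro rfl; norm_num at hN2⟩
  have hcount : 3 ^ n * (N / 2 * ρ) ^ n * (3 ^ m * (N * ε) ^ m) < (N : ℝ) ^ (n + m) := calc
    _ = (3 / 2) ^ n * 3 ^ m * (Q * ψ) * (N : ℝ) ^ (n + m) := by
      rw [mul_pow, mul_pow, hρn, hεm, div_pow, div_pow]; ring
    _ < (N : ℝ) ^ (n + m) := by nlinarith [pow_pos (by positivity : (0 : ℝ) < N) (n + m)]
  obtain ⟨c₁, c₂, hc⟩ := exists_residueClass_avoiding_approxSolutions B N
    (by nlinarith) (by rwa [← inv_le_iff_one_le_mul₀ hε]) hcount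
  refine ⟨c₁, c₂, fun a b ha hb ⟨h₁, h₂⟩ => hc (a, b) ⟨?_, ?_⟩ ⟨ha, hb⟩⟩
  · exact lt_of_pow_lt_pow_left₀ n (by positivity) (by rwa [mul_pow, hρn])
  · exact lt_of_pow_lt_pow_left₀ m (by positivity) (by rwa [mul_pow, hεm])

theorem diophantine_congruence_unsolvable_general (m n : ℕ) (hm : 1 ≤ m) (hn : 1 ≤ n)
    (f : ℝ → ℝ) (hfpos : ∀ x > (0 : ℝ), 0 < f x) (hfmono : MonotoneOn f (Set.Ioi 0))
    (hfsum : Summable fun k : ℕ => 1 / f (k + 1))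
    (φ : ℝ → ℝ) (hφpos : ∀ Q > (0 : ℝ), 0 < φ Q)
    (hφf : ∀ Q > (1 : ℝ), φ Q ≤ Q⁻¹ * f (Real.log Q) ^ (-(m : ℝ)⁻¹)) :
    ∀ᵐ B : Fin m → Fin n → ℝ ∂volume, ∃ Q₀ > (0 : ℝ), ∀ Q ≥ Q₀,
      ∃ N₀ : ℕ, 0 < N₀ ∧ ∀ N : ℕ, N₀ ≤ N →
        ∃ c₁ : Fin n → ℤ, ∃ c₂ : Fin m → ℤ,
          ∀ a : Fin n → ℤ, ∀ b : Fin m → ℤ,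
            (∀ j, (N : ℤ) ∣ (a j - c₁ j)) → (∀ i, (N : ℤ) ∣ (b i - c₂ i)) →
            ¬(‖(fun i => matVec B (fun j => (a j : ℝ)) i - (b i : ℝ))‖ ^ m < (N : ℝ) ^ m * φ Q ∧
              ‖(fun j => (a j : ℝ))‖ ^ n < ((N : ℝ) / 2) ^ n * Q) := by
  have hC : (0 : ℝ) < (3 / 2) ^ n * 3 ^ m := by positivity
  have hsmall := eventually_mul_lt_of_le_inv_mul_rpow_neg (by positivity)
    (tendsto_atTop_of_summable_one_div hfpos hfmono hfsum) hφf (inv_pos.2 hC)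
  obtain ⟨Q₀, hQ₀⟩ := eventually_atTop.1 (hsmall.and (eventually_ge_atTop 1))
  refine ae_of_all _ fun B => ⟨max Q₀ 1, by positivity, fun Q hQ => ?_⟩
  obtain ⟨hQφ, hQ1⟩ := hQ₀ Q (le_of_max_le_left hQ)
  obtain ⟨N₀, hN₀⟩ := eventually_atTop.1 <|
    eventually_exists_residueClass_avoiding (by omega) (by omega) B hQ1 (hφpos Q (by linarith))
      ((lt_inv_mul_iff₀ hC).1 (by rwa [mul_one]))
  exact ⟨N₀ + 1, N₀.succ_pos, fun N hN => hN₀ N (by omega)⟩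

/-- **Corollary, second part.** Let `f : ℝ_{>0} → ℝ_{>0}` be increasing with `∑ 1/f(k) < ∞`
growing at most polynomially, and let `φ : ℝ_{>0} → ℝ_{>0}` be decreasing with
`φ(Q) ≤ Q⁻¹ (f(log Q))^{-1/m}`.  Then for almost every `m×n` real matrix `B` there is
`Q₀ > 0` such that for every `Q ≥ Q₀` there is `N₀` such that for every integer `N ≥ N₀`
some congruence class `c ∈ ℤ^d` modulo `N` contains no solution `(a, b)` of
`‖Ba − b‖_∞^m < N^m φ(Q)` and `‖a‖_∞^n < (N/2)^n Q`. -/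
theorem diophantine_congruence_unsolvable (m n : ℕ) (hm : 1 ≤ m) (hn : 1 ≤ n)
    (f : ℝ → ℝ) (hfpos : ∀ x > (0 : ℝ), 0 < f x) (hfmono : MonotoneOn f (Set.Ioi 0))
    (hfsum : Summable fun k : ℕ => 1 / f (k + 1))
    (hfpoly : ∃ k > (0 : ℝ), ∃ x₀ > (0 : ℝ), ∀ x ≥ x₀, f x ≤ x ^ k)
    (φ : ℝ → ℝ) (hφpos : ∀ Q > (0 : ℝ), 0 < φ Q) (hφanti : AntitoneOn φ (Set.Ioi 0))
    (hφf : ∀ Q > (1 : ℝ), φ Q ≤ Q⁻¹ * f (Real.log Q) ^ (-(m : ℝ)⁻¹)) :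
    ∀ᵐ B : Fin m → Fin n → ℝ ∂volume, ∃ Q₀ > (0 : ℝ), ∀ Q ≥ Q₀,
      ∃ N₀ : ℕ, 0 < N₀ ∧ ∀ N : ℕ, N₀ ≤ N →
        ∃ c₁ : Fin n → ℤ, ∃ c₂ : Fin m → ℤ,
          ∀ a : Fin n → ℤ, ∀ b : Fin m → ℤ,
            (∀ j, (N : ℤ) ∣ (a j - c₁ j)) → (∀ i, (N : ℤ) ∣ (b i - c₂ i)) →
            ¬(‖(fun i => matVec B (fun j => (a j : ℝ)) i - (b i : ℝ))‖ ^ m < (N : ℝ) ^ m * φ Q ∧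
              ‖(fun j => (a j : ℝ))‖ ^ n < ((N : ℝ) / 2) ^ n * Q) :=
  diophantine_congruence_unsolvable_general m n hm hn f hfpos hfmono hfsum φ hφpos hφf
end

section
/- Let m, n ≥ 1 be integers, d = m + n, and let L ⊆ ℝ^d be a full-rank lattice. Suppose c₁ > 0 and W ⊆ ℝ^d is a linear subspace of dimension m − 1 such that for all x, x′ ∈ L, either x − x′ ∈ W or the Euclidean distance from x − x′ to W is at least c₁ · λ_m(L). Set c₂ = (1 − (2n)^{−1}) · c₁ / √d. Then there exists y ∈ ℝ^m such that the cube [0, c₂ λ_m(L)]^d + (0_n, y) (the translate of [0, c₂ λ_m(L)]^d by the vector of ℝ^n × ℝ^m whose first n coordinates vanish and whose last m coordinates are y) is disjoint from the translate W + x for every x ∈ L. -/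
/-- The `i`-th successive minimum of a lattice `L ⊆ ℝ^ι`: the least `r > 0` such that `L`
contains `i` linearly independent vectors of Euclidean norm at most `r`. -/
noncomputable def succMin {ι : Type*} [Fintype ι] (L : Submodule ℤ (ι → ℝ)) (i : ℕ) : ℝ :=
  sInf {r : ℝ | 0 < r ∧ ∃ v : Fin i → (ι → ℝ), (∀ j, v j ∈ L) ∧
    LinearIndependent ℝ v ∧ ∀ j, euclNorm (v j) ≤ r}

lemma AddSubgroup.exists_pos_forall_le_norm {E : Type*} [SeminormedAddCommGroup E]
    (S : AddSubgroup E) [DiscreteTopology S] :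
    ∃ ε > 0, ∀ x ∈ S, x ≠ 0 → ε ≤ ‖x‖ := by
  obtain ⟨ε, hε, hball⟩ := Metric.isOpen_iff.1 (isOpen_discrete ({0} : Set S)) 0 rfl
  refine ⟨ε, hε, fun x hx hx0 => le_of_not_gt fun hlt => hx0 ?_⟩
  have : (⟨x, hx⟩ : S) ∈ Metric.ball 0 ε := by simpa using hlt
  simpa using hball this

theorem IsLocallyConstant.of_forall_dist_lt {X Y : Type*} [PseudoMetricSpace X]
    {f : X → Y} {η : ℝ} (hη : 0 < η) (hf : ∀ x x', dist x x' < η → f x = f x') :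
    IsLocallyConstant f :=
  (IsLocallyConstant.iff_exists_open f).2 fun x =>
    ⟨Metric.ball x η, Metric.isOpen_ball, Metric.mem_ball_self hη, fun _ hx' => hf _ _ hx'⟩

theorem Submodule.le_of_forall_exists_norm_sub_le {E : Type*} [NormedAddCommGroup E]
    [NormedSpace ℝ E] {U W : Submodule ℝ E} (hW : IsClosed (W : Set E)) {R : ℝ}
    (h : ∀ u ∈ U, ∃ w ∈ W, ‖u - w‖ ≤ R) : U ≤ W := by
  intro u hu
  rw [← SetLike.mem_coe, ← hW.closure_eq, Metric.mem_closure_iff]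
  intro ε hε
  set t : ℝ := (|R| + 1) / ε
  have ht : 0 < t := by positivity
  obtain ⟨w, hw, hdist⟩ := h (t • u) (U.smul_mem t hu)
  refine ⟨t⁻¹ • w, W.smul_mem _ hw, ?_⟩
  have hscale : u - t⁻¹ • w = t⁻¹ • (t • u - w) := by
    rw [smul_sub, smul_smul, inv_mul_cancel₀ ht.ne', one_smul]
  rw [dist_eq_norm, hscale, norm_smul, Real.norm_of_nonneg (inv_nonneg.2 ht.le)]
  calc t⁻¹ * ‖t • u - w‖ ≤ t⁻¹ * |R| :=
        mul_le_mul_of_nonneg_left (hdist.trans (le_abs_self R)) (inv_nonneg.2 ht.le)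
    _ < ε := by
        rw [inv_mul_lt_iff₀ ht, div_mul_cancel₀ _ hε.ne']
        linarith

section EuclNorm

variable {ι : Type*} [Fintype ι]

lemma norm_le_euclNorm (x : ι → ℝ) : ‖x‖ ≤ euclNorm x :=
  (pi_norm_le_iff_of_nonneg (Real.sqrt_nonneg _)).2 fun i => by
    rw [Real.norm_eq_abs, ← Real.sqrt_sq_eq_abs]
    exact Real.sqrt_le_sqrt (Finset.single_le_sum (fun j _ => sq_nonneg (x j)) (Finset.mem_univ i))

lemma euclNorm_le_sqrt_card_mul_norm (x : ι → ℝ) :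
    euclNorm x ≤ Real.sqrt (Fintype.card ι) * ‖x‖ := by
  rw [euclNorm, ← Real.sqrt_sq (norm_nonneg x), ← Real.sqrt_mul (Nat.cast_nonneg _)]
  refine Real.sqrt_le_sqrt ?_
  calc ∑ i, x i ^ 2 ≤ ∑ _i : ι, ‖x‖ ^ 2 := Finset.sum_le_sum fun i _ => by
        rw [← sq_abs, ← Real.norm_eq_abs]
        exact pow_le_pow_left₀ (norm_nonneg _) (norm_le_pi_norm x i) 2
    _ = Fintype.card ι * ‖x‖ ^ 2 := by simp

lemma succMin_pos {L : Submodule ℤ (ι → ℝ)} [DiscreteTopology L.toAddSubgroup] {i : ℕ}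
    (hi : 1 ≤ i) (hL : ∃ v : Fin i → (ι → ℝ), (∀ j, v j ∈ L) ∧ LinearIndependent ℝ v) :
    0 < succMin L i := by
  obtain ⟨ε, hε, hmin⟩ := L.toAddSubgroup.exists_pos_forall_le_norm
  obtain ⟨v, hvL, hv⟩ := hL
  obtain ⟨R, hR⟩ := (Set.finite_range fun j => euclNorm (v j)).bddAbove
  have hne : {r : ℝ | 0 < r ∧ ∃ v : Fin i → (ι → ℝ), (∀ j, v j ∈ L) ∧
      LinearIndependent ℝ v ∧ ∀ j, euclNorm (v j) ≤ r}.Nonempty :=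
    ⟨max R 1, by positivity, v, hvL, hv, fun j => (hR ⟨j, rfl⟩).trans (le_max_left _ _)⟩
  refine hε.trans_le (le_csInf hne ?_)
  rintro r ⟨-, u, huL, hu, hur⟩
  let j₀ : Fin i := ⟨0, hi⟩
  exact (hmin _ (huL j₀) (hu.ne_zero j₀)).trans ((norm_le_euclNorm _).trans (hur j₀))

lemma succMin_span_pos {b : ι → (ι → ℝ)} (hb : LinearIndependent ℝ b) {i : ℕ} (hi : 1 ≤ i)
    (hid : i ≤ Fintype.card ι) : 0 < succMin (Submodule.span ℤ (Set.range b)) i := by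
  have : Nonempty ι := Fintype.card_pos_iff.1 (by omega)
  have : DiscreteTopology (Submodule.span ℤ (Set.range b)).toAddSubgroup := by
    rw [← coe_basisOfLinearIndependentOfCardEqFinrank hb (by simp)]
    infer_instance
  let f : Fin i ↪ ι := (Fin.castLEEmb hid).trans (Fintype.equivFin ι).symm.toEmbedding
  exact succMin_pos hi ⟨b ∘ f, fun j => Submodule.subset_span ⟨_, rfl⟩, hb.comp _ f.injective⟩

lemma sub_mem_of_euclNorm_sub_lt {L : Submodule ℤ (ι → ℝ)} {W : Submodule ℝ (ι → ℝ)} {δ : ℝ}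
    (hsep : ∀ x ∈ L, ∀ x' ∈ L, x - x' ∈ W ∨ ∀ w ∈ W, δ ≤ euclNorm (x - x' - w))
    {x x' z z' : ι → ℝ} (hx : x ∈ L) (hx' : x' ∈ L) (hz : z - x ∈ W) (hz' : z' - x' ∈ W)
    (hzz' : euclNorm (z - z') < δ) : x - x' ∈ W := by
  refine (hsep x hx x' hx').resolve_right fun h => ?_
  have := h _ (W.sub_mem hz' hz)
  rw [show x - x' - ((z' - x') - (z - x)) = z - z' by abel] at this
  exact this.not_gt hzz'

variable [Nonempty ι] {s : ℝ}

lemma norm_sub_le_of_forall_le_le_add {a z : ι → ℝ} (hz : ∀ i, a i ≤ z i ∧ z i ≤ a i + s) :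
    ‖z - a‖ ≤ s := by
  refine (pi_norm_le_iff_of_nonempty _).2 fun i => ?_
  rw [Pi.sub_apply, Real.norm_eq_abs, abs_le]
  constructor <;> linarith [hz i]

lemma norm_sub_le_add_norm_sub_of_forall_le_le_add {a a' z z' : ι → ℝ}
    (hz : ∀ i, a i ≤ z i ∧ z i ≤ a i + s) (hz' : ∀ i, a' i ≤ z' i ∧ z' i ≤ a' i + s) :
    ‖z - z'‖ ≤ s + ‖a - a'‖ := by
  refine (pi_norm_le_iff_of_nonempty _).2 fun i => ?_
  have haa' := abs_le.1 ((Real.norm_eq_abs _).symm.trans_le (norm_le_pi_norm (a - a') i))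
  simp only [Pi.sub_apply, Real.norm_eq_abs, abs_le] at haa' ⊢
  constructor <;> linarith [hz i, hz' i]

lemma exists_mem_norm_sub_le_of_forall_le_le_add {W : Submodule ℝ (ι → ℝ)} {a x z : ι → ℝ}
    (hz : ∀ i, a i ≤ z i ∧ z i ≤ a i + s) (hzx : z - x ∈ W) : ∃ w ∈ W, ‖a - w‖ ≤ ‖x‖ + s :=
  ⟨z - x, hzx, calc
    ‖a - (z - x)‖ = ‖x - (z - a)‖ := by congr 1; abel
    _ ≤ ‖x‖ + s := (norm_sub_le _ _).trans (by gcongr; exact norm_sub_le_of_forall_le_le_add hz)⟩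

lemma sub_mem_of_near_cubes {L : Submodule ℤ (ι → ℝ)} {W : Submodule ℝ (ι → ℝ)} {δ : ℝ}
    (hsep : ∀ x ∈ L, ∀ x' ∈ L, x - x' ∈ W ∨ ∀ w ∈ W, δ ≤ euclNorm (x - x' - w))
    {a a' x x' z z' : ι → ℝ} (hx : x ∈ L) (hx' : x' ∈ L)
    (hz : ∀ i, a i ≤ z i ∧ z i ≤ a i + s) (hz' : ∀ i, a' i ≤ z' i ∧ z' i ≤ a' i + s)
    (hzx : z - x ∈ W) (hzx' : z' - x' ∈ W)
    (haa' : Real.sqrt (Fintype.card ι) * (s + ‖a - a'‖) < δ) : x - x' ∈ W :=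
  sub_mem_of_euclNorm_sub_lt hsep hx hx' hzx hzx' <| calc
    euclNorm (z - z') ≤ Real.sqrt (Fintype.card ι) * ‖z - z'‖ :=
      euclNorm_le_sqrt_card_mul_norm _
    _ ≤ Real.sqrt (Fintype.card ι) * (s + ‖a - a'‖) := by
      gcongr; exact norm_sub_le_add_norm_sub_of_forall_le_le_add hz hz'
    _ < δ := haa'

end EuclNorm

section ZeroAppend

def zeroAppend (R : Type*) [Semiring R] (n m : ℕ) : (Fin m → R) →ₗ[R] (Fin (n + m) → R) where
  toFun y := Fin.append (fun _ : Fin n => (0 : R)) y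
  map_add' y y' := by
    ext i; refine Fin.addCases (fun j => ?_) (fun j => ?_) i <;> simp
  map_smul' c y := by
    ext i; refine Fin.addCases (fun j => ?_) (fun j => ?_) i <;> simp

@[simp]
lemma zeroAppend_apply (R : Type*) [Semiring R] (n m : ℕ) (y : Fin m → R) :
    zeroAppend R n m y = Fin.append (fun _ : Fin n => (0 : R)) y := rfl

lemma zeroAppend_injective (R : Type*) [Semiring R] (n m : ℕ) :
    Function.Injective (zeroAppend R n m) := fun y y' h => by
  ext j; simpa using congrFun h (Fin.natAdd n j)

lemma norm_zeroAppend {R : Type*} [NormedRing R] (n m : ℕ) (y : Fin m → R) :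
    ‖zeroAppend R n m y‖ = ‖y‖ := by
  rw [← dist_zero_right, ← dist_zero_right y, dist_edist, dist_edist,
    ← map_zero (zeroAppend R n m), zeroAppend_apply, zeroAppend_apply,
    Fin.edist_append_eq_max_edist]
  simp

end ZeroAppend

/-- **Lemma 2.6.** Let `d = n + m` and `L ⊆ ℝ^d` be a full-rank lattice, `c₁ > 0`, and
`W ⊆ ℝ^d` a subspace of dimension `m − 1` such that any two elements of `L` either differ by
an element of `W` or their difference is at Euclidean distance at least `c₁ λ_m(L)` from `W`.
With `c₂ = (1 − (2n)⁻¹) c₁ / √d`, there exists `y ∈ ℝ^m` such that the translated cube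
`[0, c₂ λ_m(L)]^d + (0_n, y)` is disjoint from every translate `W + x`, `x ∈ L`. -/
theorem cube_avoiding_subspace_translates (m n : ℕ) (hm : 1 ≤ m) (hn : 1 ≤ n)
    (b : Fin (n + m) → (Fin (n + m) → ℝ)) (hb : LinearIndependent ℝ b)
    (L : Submodule ℤ (Fin (n + m) → ℝ)) (hL : L = Submodule.span ℤ (Set.range b))
    (c₁ : ℝ) (hc₁ : 0 < c₁)
    (W : Submodule ℝ (Fin (n + m) → ℝ)) (hW : Module.finrank ℝ W = m - 1)
    (hsep : ∀ x ∈ L, ∀ x' ∈ L, x - x' ∈ W ∨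
      ∀ w ∈ W, c₁ * succMin L m ≤ euclNorm (x - x' - w)) :
    ∃ y : Fin m → ℝ, ∀ x ∈ L, ∀ z : Fin (n + m) → ℝ,
      (∀ i, Fin.append (fun _ : Fin n => (0 : ℝ)) y i ≤ z i ∧
        z i ≤ Fin.append (fun _ : Fin n => (0 : ℝ)) y i
            + ((1 - (2 * (n : ℝ))⁻¹) * c₁ / Real.sqrt (n + m)) * succMin L m) →
      z - x ∉ W := by
  have : Nonempty (Fin (n + m)) := ⟨⟨0, by omega⟩⟩
  have hmin : 0 < succMin L m := hL ▸ succMin_span_pos hb hm (by simp)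
  have hd : 0 < Real.sqrt (n + m) := Real.sqrt_pos.2 (by positivity)
  set s := (1 - (2 * (n : ℝ))⁻¹) * c₁ / Real.sqrt (n + m) * succMin L m
  have hs : s < c₁ * succMin L m / Real.sqrt (n + m) := by
    rw [← sub_pos, show c₁ * succMin L m / Real.sqrt (n + m) - s
      = (2 * (n : ℝ))⁻¹ * (c₁ * succMin L m) / Real.sqrt (n + m) by ring]
    exact div_pos (by positivity) hd
  by_contra! hcov
  choose X hXL Z hZ hZX using hcov
  have hclose (y y' : Fin m → ℝ) (h : dist y y' < c₁ * succMin L m / Real.sqrt (n + m) - s) :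
      X y - X y' ∈ W :=
    sub_mem_of_near_cubes (a := zeroAppend ℝ n m y) (a' := zeroAppend ℝ n m y') hsep
      (hXL y) (hXL y') (hZ y) (hZ y') (hZX y) (hZX y') <| by
      rw [← map_sub, norm_zeroAppend, ← dist_eq_norm, Fintype.card_fin, Nat.cast_add,
        mul_comm, ← lt_div_iff₀ hd]
      linarith
  have hconst (y : Fin m → ℝ) : X y - X 0 ∈ W := (Submodule.Quotient.eq W).1 <|
    (IsLocallyConstant.of_forall_dist_lt (sub_pos.2 hs) fun y y' h =>
      (Submodule.Quotient.eq W).2 (hclose y y' h)).apply_eq_of_preconnectedSpace y 0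
  have hrange : LinearMap.range (zeroAppend ℝ n m) ≤ W :=
    Submodule.le_of_forall_exists_norm_sub_le W.closed_of_finiteDimensional <| by
      rintro _ ⟨y, rfl⟩
      exact exists_mem_norm_sub_le_of_forall_le_le_add (hZ y)
        (by simpa using W.add_mem (hZX y) (hconst y))
  have hdim := Submodule.finrank_mono hrange
  rw [LinearMap.finrank_range_of_inj (zeroAppend_injective ℝ n m), Module.finrank_fin_fun,
    hW] at hdim
  omega
end

section
/- Let B be an m×n real matrix, Q > 0 and t > 0. If the sets Bk + [−t, t]^m + ℤ^m, for k ranging over ℤ^n ∩ (0, Q^{1/n}]^n, cover all of ℝ^m, then the set E = {(x, Bx + y) : x ∈ ℝ^n, ‖x‖_∞ ≤ Q^{1/n}/2, y ∈ ℝ^m, ‖y‖_∞ ≤ t} satisfies E + ℤ^d = ℝ^d; in particular, for every positive integer N, E + ℤ^d contains every point of (N^{−1}ℤ)^d. -/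
/-- `u ∈ E + ℤ^d`, where `E = {(x, Bx + y) : ‖x‖_∞ ≤ Q^{1/n}/2, ‖y‖_∞ ≤ t} ⊆ ℝ^n × ℝ^m`. -/
def memEZ {m n : ℕ} (B : Fin m → Fin n → ℝ) (Q t : ℝ)
    (u : (Fin n → ℝ) × (Fin m → ℝ)) : Prop :=
  ∃ x : Fin n → ℝ, ∃ y : Fin m → ℝ,
    (∀ j, |x j| ≤ Q ^ ((n : ℝ)⁻¹) / 2) ∧ (∀ i, |y i| ≤ t) ∧
    ∃ a : Fin n → ℤ, ∃ c : Fin m → ℤ,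
      u.1 = x + (fun j => (a j : ℝ)) ∧ u.2 = matVec B x + y + (fun i => (c i : ℝ))

/-- The cubes `Bk + [−t,t]^m + ℤ^m`, `k ∈ ℤ^n ∩ (0, Q^{1/n}]^n`, cover all of `ℝ^m`. -/
def cubesCover {m n : ℕ} (B : Fin m → Fin n → ℝ) (Q t : ℝ) : Prop :=
  ∀ v : Fin m → ℝ, ∃ k : Fin n → ℤ,
    (∀ j, 0 < (k j : ℝ) ∧ (k j : ℝ) ≤ Q ^ ((n : ℝ)⁻¹)) ∧
    ∃ l : Fin m → ℤ, ∀ i, |v i - (matVec B (fun j => (k j : ℝ)) i + (l i : ℝ))| ≤ t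

/-- **Proposition 3.1, "if" direction.** If the cubes `Bk + [−t,t]^m + ℤ^m`
(`k ∈ ℤ^n ∩ (0, Q^{1/n}]^n`) cover `ℝ^m`, then `E + ℤ^d = ℝ^d` where
`E = {(x, Bx + y) : ‖x‖_∞ ≤ Q^{1/n}/2, ‖y‖_∞ ≤ t}`; in particular `E + ℤ^d` contains every
point of `(N⁻¹ℤ)^d` for every positive integer `N`. -/
theorem EZ_covers_of_cubesCover (m n : ℕ) (hm : 1 ≤ m) (hn : 1 ≤ n)
    (B : Fin m → Fin n → ℝ) (Q t : ℝ) (hQ : 0 < Q) (ht : 0 < t)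
    (hcov : cubesCover B Q t) :
    (∀ u : (Fin n → ℝ) × (Fin m → ℝ), memEZ B Q t u) ∧
    (∀ N : ℕ, 0 < N → ∀ a : Fin n → ℤ, ∀ c : Fin m → ℤ,
      memEZ B Q t (fun j => (a j : ℝ) / N, fun i => (c i : ℝ) / N)) := by
  have main : ∀ u : (Fin n → ℝ) × (Fin m → ℝ), memEZ B Q t u := by
    intro u
    set R : ℝ := Q ^ ((n : ℝ)⁻¹) with hR
    set s : Fin n → ℤ := fun j => ⌈u.1 j + R / 2⌉ with hs
    set w : Fin n → ℝ := fun j => u.1 j - (s j : ℝ) with hw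
    obtain ⟨k, hk, l, hl⟩ := hcov (fun i => u.2 i - matVec B w i)
    set x : Fin n → ℝ := fun j => w j + (k j : ℝ) with hx
    have hBx : ∀ i, matVec B x i = matVec B w i + matVec B (fun j => (k j : ℝ)) i := by
      intro i
      simp [matVec, hx, mul_add, Finset.sum_add_distrib]
    refine ⟨x, fun i => u.2 i - matVec B x i - (l i : ℝ), ?_, ?_,
      fun j => s j - k j, l, ?_, ?_⟩
    · intro j
      have hk1 : (1 : ℝ) ≤ (k j : ℝ) := by
        have : (0 : ℤ) < k j := by exact_mod_cast (hk j).1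
        exact_mod_cast this
      have hkR : (k j : ℝ) ≤ R := (hk j).2
      have hceil1 : u.1 j + R / 2 ≤ (s j : ℝ) := Int.le_ceil _
      have hceil2 : (s j : ℝ) < u.1 j + R / 2 + 1 := Int.ceil_lt_add_one _
      rw [abs_le]
      constructor
      · have : w j > -R / 2 - 1 := by simp only [hw]; linarith
        simp only [hx]; linarith
      · have : w j ≤ -R / 2 := by simp only [hw]; linarith
        simp only [hx]; linarith
    · intro i
      have := hl i
      show |u.2 i - matVec B x i - (l i : ℝ)| ≤ t
      rw [hBx i]
      have h : u.2 i - (matVec B w i + matVec B (fun j => (k j : ℝ)) i) - (l i : ℝ)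
          = u.2 i - matVec B w i - (matVec B (fun j => (k j : ℝ)) i + (l i : ℝ)) := by ring
      rw [h]
      simpa using this
    · funext j
      simp only [hx, hw, Pi.add_apply]
      push_cast
      ring
    · funext i
      simp only [Pi.add_apply]
      ring
  refine ⟨main, fun N _ a c => main _⟩
end
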